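/- arXiv:2408.13580 — 14 statements merged into one kernel-verified Lean document; each statement's English description precedes it below -/
import Mathlib

section
/- Let 0 < γ ≤ 1 and 0 < lo ≤ hi with e^{−1/γ}·hi ≤ lo. Define q(x) = γ·ln(x/hi) + 1 and t(x) = γ·x + lo·(γ·(ln(lo/hi) − 1) + 1). Then for all x, x' ∈ [lo, hi]: 0 ≤ q(x) ≤ 1, t(x) ≥ 0, q(x)·x − t(x) ≥ 0 (individual rationality), and q(x)·x − t(x) ≥ q(x')·x − t(x') (incentive compatibility). -/
open Real

/-- the single-product component of the semi-separable mechanism `M_γ`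
in the regime `e^{-1/γ}·hi ≤ lo`: `q(x) = γ·ln(x/hi) + 1` and
`t(x) = γ·x + lo·(γ·(ln(lo/hi) − 1) + 1)` satisfy the allocation bounds,
nonnegativity of payment, individual rationality, and incentive compatibility
on `[lo, hi]`. -/
theorem stmt1 (γ lo hi : ℝ) (hγ0 : 0 < γ) (hγ1 : γ ≤ 1)
    (hlo : 0 < lo) (hlohi : lo ≤ hi) (hreg : Real.exp (-1/γ) * hi ≤ lo)
    (q t : ℝ → ℝ)
    (hq : ∀ x, q x = γ * Real.log (x / hi) + 1)
    (ht : ∀ x, t x = γ * x + lo * (γ * (Real.log (lo / hi) - 1) + 1)) :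
    ∀ x ∈ Set.Icc lo hi,
      (0 ≤ q x ∧ q x ≤ 1) ∧
      0 ≤ t x ∧
      0 ≤ q x * x - t x ∧
      ∀ x' ∈ Set.Icc lo hi, q x' * x - t x' ≤ q x * x - t x := by
  have hhi : 0 < hi := hlo.trans_le hlohi
  -- q is in [0,1] on [lo,hi]
  have hq01 : ∀ y, lo ≤ y → y ≤ hi → 0 ≤ q y ∧ q y ≤ 1 := by
    intro y hy1 hy2
    have hy0 : 0 < y := hlo.trans_le hy1
    have hexp : Real.exp (-1/γ) ≤ y / hi := by
      rw [le_div_iff₀ hhi]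
      exact hreg.trans hy1
    have hlog1 : (-1/γ) ≤ Real.log (y / hi) := by
      calc -1/γ = Real.log (Real.exp (-1/γ)) := (Real.log_exp _).symm
        _ ≤ Real.log (y / hi) := Real.log_le_log (Real.exp_pos _) hexp
    have hlog2 : Real.log (y / hi) ≤ 0 := by
      apply Real.log_nonpos
      · positivity
      · rw [div_le_one hhi]; exact hy2
    have h1 : -1 ≤ γ * Real.log (y / hi) := by
      have h := mul_le_mul_of_nonneg_left hlog1 hγ0.le
      have heq : γ * (-1/γ) = -1 := by field_simp
      linarith
    have h2 : γ * Real.log (y / hi) ≤ 0 := mul_nonpos_of_nonneg_of_nonpos hγ0.le hlog2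
    rw [hq]
    constructor <;> linarith
  have hqlo := hq01 lo le_rfl hlohi
  -- rewrite t in terms of q lo
  have htq : ∀ x, t x = γ * (x - lo) + lo * q lo := by
    intro x
    rw [ht, hq]
    ring
  -- key inequality for IC
  have key : ∀ a b : ℝ, 0 < a → 0 < b → a - b ≤ a * Real.log (a / b) := by
    intro a b ha hb
    have h := Real.log_le_sub_one_of_pos (show 0 < b / a by positivity)
    have hlog : Real.log (a / b) = - Real.log (b / a) := by
      rw [← Real.log_inv, inv_div]
    rw [hlog]
    have := mul_le_mul_of_nonneg_left h ha.le
    have hba : a * (b / a) = b := by field_simp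
    nlinarith
  intro x hx
  obtain ⟨hxlo, hxhi⟩ := hx
  have hx0 : 0 < x := hlo.trans_le hxlo
  have hqx := hq01 x hxlo hxhi
  -- IC
  have hIC : ∀ x' ∈ Set.Icc lo hi, q x' * x - t x' ≤ q x * x - t x := by
    intro x' hx'
    obtain ⟨hx'lo, hx'hi⟩ := hx'
    have hx'0 : 0 < x' := hlo.trans_le hx'lo
    have hlogdiff : Real.log (x / hi) - Real.log (x' / hi) = Real.log (x / x') := by
      rw [Real.log_div (ne_of_gt hx0) (ne_of_gt hhi),
        Real.log_div (ne_of_gt hx'0) (ne_of_gt hhi),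
        Real.log_div (ne_of_gt hx0) (ne_of_gt hx'0)]
      ring
    have hk := key x x' hx0 hx'0
    have h := mul_le_mul_of_nonneg_left hk hγ0.le
    rw [hq, hq, htq, htq,
      show Real.log (x/hi) = Real.log (x/x') + Real.log (x'/hi) by linarith]
    nlinarith [h]
  refine ⟨hqx, ?_, ?_, hIC⟩
  · rw [htq]
    nlinarith [hqlo.1]
  · have := hIC lo ⟨le_rfl, hlohi⟩
    have hlo' : q lo * x - t lo = q lo * (x - lo) := by rw [htq]; ring
    nlinarith [hqlo.1]
end

section
/- Let 0 < γ ≤ 1 and 0 < lo ≤ hi with lo < e^{−1/γ}·hi. Define q(x) = max(γ·ln(x/hi) + 1, 0) and t(x) = γ·max(x − e^{−1/γ}·hi, 0). Then for all x, x' ∈ [lo, hi]: 0 ≤ q(x) ≤ 1, t(x) ≥ 0, q(x)·x − t(x) ≥ 0 (individual rationality), and q(x)·x − t(x) ≥ q(x')·x − t(x') (incentive compatibility). -/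
open Real

lemma key_log_ineq (a b : ℝ) (ha : 0 < a) (hb : 0 < b) :
    a * (Real.log b - Real.log a) ≤ b - a := by
  have h := Real.log_le_sub_one_of_pos (div_pos hb ha)
  rw [Real.log_div hb.ne' ha.ne'] at h
  have h2 := mul_le_mul_of_nonneg_left h ha.le
  have hba : a * (b / a - 1) = b - a := by field_simp
  linarith [hba ▸ h2]

/-- the single-product component of the semi-separable mechanism `M_γ`
in the regime `lo < e^{-1/γ}·hi`: `q(x) = max(γ·ln(x/hi) + 1, 0)` and
`t(x) = γ·max(x − e^{-1/γ}·hi, 0)` satisfy the allocation bounds,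
nonnegativity of payment, individual rationality, and incentive compatibility
on `[lo, hi]`. -/
theorem stmt2 (γ lo hi : ℝ) (hγ0 : 0 < γ) (hγ1 : γ ≤ 1)
    (hlo : 0 < lo) (hlohi : lo ≤ hi) (hreg : lo < Real.exp (-1/γ) * hi)
    (q t : ℝ → ℝ)
    (hq : ∀ x, q x = max (γ * Real.log (x / hi) + 1) 0)
    (ht : ∀ x, t x = γ * max (x - Real.exp (-1/γ) * hi) 0) :
    ∀ x ∈ Set.Icc lo hi,
      (0 ≤ q x ∧ q x ≤ 1) ∧
      0 ≤ t x ∧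
      0 ≤ q x * x - t x ∧
      ∀ x' ∈ Set.Icc lo hi, q x' * x - t x' ≤ q x * x - t x := by
  have hhi0 : 0 < hi := lt_of_lt_of_le hlo hlohi
  set c : ℝ := Real.exp (-1/γ) * hi with hcdef
  have hc0 : 0 < c := mul_pos (Real.exp_pos _) hhi0
  have hγinv : γ * (1/γ) = 1 := by field_simp
  have hlogc : Real.log c = Real.log hi - 1/γ := by
    rw [hcdef, Real.log_mul (Real.exp_ne_zero _) hhi0.ne', Real.log_exp]; ring
  -- q formula above the threshold
  have hqhi : ∀ z, c ≤ z → q z = γ * (Real.log z - Real.log hi) + 1 := by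
    intro z hz
    have hz0 : 0 < z := lt_of_lt_of_le hc0 hz
    have hlog : Real.log c ≤ Real.log z := Real.log_le_log hc0 hz
    rw [hq, Real.log_div hz0.ne' hhi0.ne']
    exact max_eq_left (by nlinarith)
  have hqlo : ∀ z, 0 < z → z ≤ c → q z = 0 := by
    intro z hz0 hz
    have hlog : Real.log z ≤ Real.log c := Real.log_le_log hz0 hz
    rw [hq, Real.log_div hz0.ne' hhi0.ne']
    exact max_eq_right (by nlinarith)
  have hthi : ∀ z, c ≤ z → t z = γ * (z - c) := by
    intro z hz
    rw [ht, max_eq_left (sub_nonneg.2 hz)]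
  have htlo : ∀ z, z ≤ c → t z = 0 := by
    intro z hz
    rw [ht, max_eq_right (sub_nonpos.2 hz), mul_zero]
  intro x hx
  obtain ⟨hx1, hx2⟩ := hx
  have hx0 : 0 < x := lt_of_lt_of_le hlo hx1
  -- individual rationality
  have hir : 0 ≤ q x * x - t x := by
    rcases le_total x c with hxc | hxc
    · rw [hqlo x hx0 hxc, htlo x hxc]; simp
    · rw [hqhi x hxc, hthi x hxc]
      have hk := mul_le_mul_of_nonneg_left (key_log_ineq x c hx0 hc0) hγ0.le
      have hxg : γ * (1/γ) * x = x := by field_simp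
      have hhieq : Real.log hi = Real.log c + 1/γ := by linarith
      rw [hhieq]; nlinarith [hk, hxg]
  refine ⟨⟨?_, ?_⟩, ?_, hir, ?_⟩
  · rw [hq]; exact le_max_right _ _
  · rw [hq]
    have hlog : Real.log (x / hi) ≤ 0 :=
      Real.log_nonpos (by positivity) ((div_le_one hhi0).2 hx2)
    have : γ * Real.log (x / hi) + 1 ≤ 1 := by nlinarith
    exact max_le this zero_le_one
  · rw [ht]; exact mul_nonneg hγ0.le (le_max_right _ _)
  · intro x' hx'
    obtain ⟨hx'1, hx'2⟩ := hx'
    have hx'0 : 0 < x' := lt_of_lt_of_le hlo hx'1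
    rcases le_total x' c with hx'c | hx'c
    · rw [hqlo x' hx'0 hx'c, htlo x' hx'c]
      simpa using hir
    · rcases le_total x c with hxc | hxc
      · rw [hqlo x hx0 hxc, htlo x hxc, hqhi x' hx'c, hthi x' hx'c]
        have hk := mul_le_mul_of_nonneg_left (key_log_ineq c x' hc0 hx'0) hγ0.le
        have hqx' : 0 ≤ γ * (Real.log x' - Real.log hi) + 1 := by
          have := hqhi x' hx'c
          rw [hq x'] at this
          linarith [le_max_right (γ * Real.log (x' / hi) + 1) (0:ℝ), this ▸ le_max_right (γ * Real.log (x' / hi) + 1) (0:ℝ)]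
        have hmul : (γ * (Real.log x' - Real.log hi) + 1) * x ≤
            (γ * (Real.log x' - Real.log hi) + 1) * c :=
          mul_le_mul_of_nonneg_left hxc hqx'
        have hcg : γ * (1/γ) * c = c := by field_simp
        have hhieq : Real.log hi = Real.log c + 1/γ := by linarith
        rw [hhieq] at hmul ⊢
        nlinarith [hk, hcg, hmul]
      · rw [hqhi x hxc, hthi x hxc, hqhi x' hx'c, hthi x' hx'c]
        have hk := mul_le_mul_of_nonneg_left (key_log_ineq x x' hx0 hx'0) hγ0.le
        nlinarith [hk]
end

section
/- Assume J ≥ 2, that the products are sorted so that lo_1/hi_1 ≤ lo_2/hi_2 ≤ … ≤ lo_J/hi_J, and set r_j = 1/(1 + ln(hi_j/lo_j)) for each j. Then the minimum over v ∈ V of (∑_{j=1}^J r_j·v_j)/(∑_{j=1}^J v_j) equals the minimum over k ∈ {2,…,J} of (∑_{j=1}^{k−1} r_j·hi_j + ∑_{j=k}^{J} r_j·lo_j)/(∑_{j=1}^{k−1} hi_j + ∑_{j=k}^{J} lo_j). -/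
open Real Finset

/-- with products sorted in increasing order of `lo j / hi j` and
`r j = 1/(1 + ln(hi j / lo j))`, the minimum over the box `V` of
`(∑ j, r j · v j)/(∑ j, v j)` equals the minimum over split points
`k ∈ {2,…,J}` (here `m ∈ {1,…,J-1}` in 0-indexed form, the first `m`
coordinates at `hi` and the rest at `lo`) of the corresponding ratio. -/
theorem stmt3 (J : ℕ) (hJ : 2 ≤ J) (lo hi : Fin J → ℝ)
    (hlo : ∀ j, 0 < lo j) (hlohi : ∀ j, lo j ≤ hi j)
    (hsorted : ∀ i j : Fin J, i ≤ j → lo i / hi i ≤ lo j / hi j)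
    (r : Fin J → ℝ) (hr : ∀ j, r j = 1 / (1 + Real.log (hi j / lo j))) :
    IsLeast {x : ℝ | ∃ v : Fin J → ℝ, (∀ j, v j ∈ Set.Icc (lo j) (hi j)) ∧
        x = (∑ j, r j * v j) / (∑ j, v j)}
      ((Finset.Icc 1 (J - 1)).inf'
        ⟨1, Finset.mem_Icc.mpr ⟨le_refl 1, by omega⟩⟩
        (fun m =>
          (∑ j : Fin J, if (j : ℕ) < m then r j * hi j else r j * lo j) /
          (∑ j : Fin J, if (j : ℕ) < m then hi j else lo j))) := by
  have hne : (Finset.Icc 1 (J - 1)).Nonempty :=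
    ⟨1, Finset.mem_Icc.mpr ⟨le_refl 1, by omega⟩⟩
  have hhi : ∀ j, 0 < hi j := fun j => lt_of_lt_of_le (hlo j) (hlohi j)
  have huniv : (Finset.univ : Finset (Fin J)).Nonempty :=
    ⟨⟨0, by omega⟩, Finset.mem_univ _⟩
  -- monotonicity of r
  have hrmono : ∀ i j : Fin J, i ≤ j → r i ≤ r j := by
    intro i j hij
    rw [hr, hr]
    have h1 : (1:ℝ) ≤ hi j / lo j := (one_le_div (hlo j)).2 (hlohi j)
    have h2 : hi j / lo j ≤ hi i / lo i := by
      rw [div_le_div_iff₀ (hlo j) (hlo i)]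
      have := hsorted i j hij
      rw [div_le_div_iff₀ (hhi i) (hhi j)] at this
      linarith
    have l1 : 0 < 1 + Real.log (hi j / lo j) := by
      have := Real.log_nonneg h1; linarith
    have l2 : Real.log (hi j / lo j) ≤ Real.log (hi i / lo i) :=
      Real.log_le_log (by positivity) h2
    exact one_div_le_one_div_of_le l1 (by linarith)
  set c := ((Finset.Icc 1 (J - 1)).inf' hne
        (fun m =>
          (∑ j : Fin J, if (j : ℕ) < m then r j * hi j else r j * lo j) /
          (∑ j : Fin J, if (j : ℕ) < m then hi j else lo j))) with hc
  have hwpos : ∀ m : ℕ, 0 < ∑ j : Fin J, if (j : ℕ) < m then hi j else lo j := by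
    intro m
    apply Finset.sum_pos (fun j _ => ?_) huniv
    split
    · exact hhi j
    · exact hlo j
  have hcle : ∀ m ∈ Finset.Icc 1 (J - 1),
      c ≤ (∑ j : Fin J, if (j : ℕ) < m then r j * hi j else r j * lo j) /
          (∑ j : Fin J, if (j : ℕ) < m then hi j else lo j) := by
    intro m hm
    exact Finset.inf'_le _ hm
  constructor
  · -- membership
    obtain ⟨m, hm, hmeq⟩ := Finset.exists_mem_eq_inf' hne
      (fun m =>
          (∑ j : Fin J, if (j : ℕ) < m then r j * hi j else r j * lo j) /
          (∑ j : Fin J, if (j : ℕ) < m then hi j else lo j))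
    refine ⟨fun j => if (j : ℕ) < m then hi j else lo j, fun j => ?_, ?_⟩
    · by_cases h : (j : ℕ) < m <;>
        simp [h, Set.mem_Icc, hlohi j, le_refl]
    · simp only [hc, hmeq, mul_ite]
  · -- lower bound
    rintro x ⟨v, hv, rfl⟩
    have hvpos : ∀ j, 0 < v j := fun j => lt_of_lt_of_le (hlo j) (hv j).1
    have hsumv : 0 < ∑ j, v j := Finset.sum_pos (fun j _ => hvpos j) huniv
    rw [le_div_iff₀ hsumv]
    set S := Finset.univ.filter (fun j : Fin J => r j < c) with hS
    set m := S.card with hmdef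
    have hdown : ∀ i j : Fin J, i ≤ j → j ∈ S → i ∈ S := by
      intro i j hij hjS
      rw [hS, Finset.mem_filter] at hjS ⊢
      exact ⟨Finset.mem_univ _, lt_of_le_of_lt (hrmono i j hij) hjS.2⟩
    have hmem : ∀ j : Fin J, r j < c ↔ (j : ℕ) < m := by
      intro j
      constructor
      · intro hj
        have hsub : Finset.Iic j ⊆ S := by
          intro i hi
          exact hdown i j (Finset.mem_Iic.mp hi) (by
            rw [hS, Finset.mem_filter]; exact ⟨Finset.mem_univ _, hj⟩)
        have := Finset.card_le_card hsub
        rw [Fin.card_Iic] at this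
        omega
      · intro hj
        by_contra hnot
        have hjS : j ∉ S := by
          rw [hS, Finset.mem_filter]
          tauto
        have hsub : S ⊆ Finset.Iio j := by
          intro i hiS
          rw [Finset.mem_Iio]
          by_contra hle
          exact hjS (hdown j i (le_of_not_gt hle) hiS)
        have := Finset.card_le_card hsub
        rw [Fin.card_Iio] at this
        omega
    have key : ∀ j ∈ Finset.univ,
        (r j - c) * (if (j : ℕ) < m then hi j else lo j) ≤ (r j - c) * v j := by
      intro j _
      by_cases h : (j : ℕ) < m
      · rw [if_pos h]
        have h1 : r j < c := (hmem j).mpr h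
        have := (hv j).2
        nlinarith
      · rw [if_neg h]
        have h1 : c ≤ r j := le_of_not_gt (fun hh => h ((hmem j).mp hh))
        have := (hv j).1
        nlinarith
    have hsums : ∑ j, (r j - c) * (if (j : ℕ) < m then hi j else lo j)
        ≤ ∑ j, (r j - c) * v j := Finset.sum_le_sum key
    have expand2 : ∑ j, (r j - c) * v j = (∑ j, r j * v j) - c * (∑ j, v j) := by
      rw [Finset.mul_sum, ← Finset.sum_sub_distrib]
      apply Finset.sum_congr rfl
      intro j _; ring
    have expand1 : ∑ j, (r j - c) * (if (j : ℕ) < m then hi j else lo j)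
        = (∑ j : Fin J, if (j : ℕ) < m then r j * hi j else r j * lo j)
          - c * (∑ j : Fin J, if (j : ℕ) < m then hi j else lo j) := by
      rw [Finset.mul_sum, ← Finset.sum_sub_distrib]
      apply Finset.sum_congr rfl
      intro j _
      split <;> ring
    have hnonneg : 0 ≤ ∑ j, (r j - c) * (if (j : ℕ) < m then hi j else lo j) := by
      have hmle : m ≤ J := by
        have h1 := Finset.card_filter_le Finset.univ (fun j : Fin J => r j < c)
        simpa [hmdef, hS] using h1
      rcases Nat.eq_zero_or_pos m with hm0 | hm1
      · apply Finset.sum_nonneg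
        intro j _
        have : ¬ ((j : ℕ) < m) := by omega
        rw [if_neg this]
        have h1 : c ≤ r j := le_of_not_gt (fun hh => this ((hmem j).mp hh))
        have := (hlo j).le
        nlinarith
      · rcases Nat.lt_or_ge m J with hmJ | hmJ
        · -- 1 ≤ m ≤ J-1
          have hmc := hcle m (Finset.mem_Icc.mpr ⟨hm1, by omega⟩)
          rw [le_div_iff₀ (hwpos m)] at hmc
          rw [expand1]
          linarith
        · -- m = J : contradiction
          exfalso
          have hmJ' : m = J := le_antisymm hmle hmJ
          set jl : Fin J := ⟨J - 1, by omega⟩ with hjl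
          have hjlval : (jl : ℕ) = J - 1 := rfl
          have hlast : r jl < c := (hmem jl).mpr (by omega)
          have hmc := hcle (J - 1) (Finset.mem_Icc.mpr ⟨by omega, le_refl _⟩)
          rw [le_div_iff₀ (hwpos (J - 1))] at hmc
          have hbound : (∑ j : Fin J, if (j : ℕ) < J - 1 then r j * hi j else r j * lo j)
              ≤ r jl * ∑ j : Fin J, if (j : ℕ) < J - 1 then hi j else lo j := by
            rw [Finset.mul_sum]
            apply Finset.sum_le_sum
            intro j _
            have hjle : r j ≤ r jl := hrmono j jl (by
              rw [Fin.le_def]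
              have := j.isLt
              omega)
            split
            · exact mul_le_mul_of_nonneg_right hjle (hhi j).le
            · exact mul_le_mul_of_nonneg_right hjle (hlo j).le
          have := hwpos (J - 1)
          nlinarith
    rw [expand1] at hnonneg
    rw [expand2] at hsums
    linarith
end

section
/- The function φ : (0,1] → ℝ defined by φ(γ) = γ·e^{−1/γ}·∑_{j∈S(γ)} hi_j − ∑_{j∉S(γ)} lo_j·(γ·ln(lo_j/hi_j) − γ + 1), where S(γ) = {j ∈ {1,…,J} : lo_j < e^{−1/γ}·hi_j}, is continuous and strictly increasing on (0,1], and there exists a unique γ* ∈ (0,1] such that φ(γ*) = 0. -/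
open Real Finset

/-- `φ(γ) = γ·e^{−1/γ}·∑_{j∈S(γ)} hi_j − ∑_{j∉S(γ)} lo_j·(γ·ln(lo_j/hi_j) − γ + 1)`,
where `S(γ) = {j : lo_j < e^{−1/γ}·hi_j}`, written with `if`-sums. -/
noncomputable def phi (J : ℕ) (lo hi : Fin J → ℝ) (γ : ℝ) : ℝ :=
  γ * Real.exp (-1/γ) * (∑ j, if lo j < Real.exp (-1/γ) * hi j then hi j else 0)
    - ∑ j, if lo j < Real.exp (-1/γ) * hi j then 0
           else lo j * (γ * Real.log (lo j / hi j) - γ + 1)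

/-- Single-index term of `φ`. -/
noncomputable def phiTerm (l h γ : ℝ) : ℝ :=
  γ * Real.exp (-1/γ) * (if l < Real.exp (-1/γ) * h then h else 0)
    - (if l < Real.exp (-1/γ) * h then 0 else l * (γ * Real.log (l / h) - γ + 1))

lemma phi_eq (J : ℕ) (lo hi : Fin J → ℝ) (γ : ℝ) :
    phi J lo hi γ = ∑ j, phiTerm (lo j) (hi j) γ := by
  unfold phi phiTerm
  rw [Finset.mul_sum, ← Finset.sum_sub_distrib]

/-- Key inequality: the "off" branch is below the "on" branch when `l ≤ e^{-1/γ} h`. -/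
lemma b2_le_b1 (l h γ : ℝ) (hl : 0 < l) (hlh : l ≤ h) (hγ : 0 < γ)
    (hc : l ≤ Real.exp (-1/γ) * h) :
    l * (γ * (1 - Real.log (l/h)) - 1) ≤ γ * Real.exp (-1/γ) * h := by
  have hh : 0 < h := hl.trans_le hlh
  have hr : 0 < l / h := div_pos hl hh
  set u : ℝ := Real.log (l/h) + 1/γ with hu
  have hlog : Real.log (l/h) = u - 1/γ := by rw [hu]; ring
  have hl_eq : l = Real.exp u * Real.exp (-1/γ) * h := by
    have h1 : Real.exp (Real.log (l/h)) = l / h := Real.exp_log hr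
    have h2 : Real.exp u * Real.exp (-1/γ) = Real.exp (Real.log (l/h)) := by
      rw [← Real.exp_add, hu]; ring_nf
    rw [h2, h1]
    field_simp
  have h1 : Real.exp u * (1 - u) ≤ 1 := by
    have hx : -u + 1 ≤ Real.exp (-u) := Real.add_one_le_exp (-u)
    have hinv : Real.exp u * Real.exp (-u) = 1 := by
      rw [← Real.exp_add]; simp
    nlinarith [Real.exp_pos u]
  have hbr : γ * (1 - (u - 1/γ)) - 1 = γ * (1 - u) := by
    field_simp; ring
  calc l * (γ * (1 - Real.log (l/h)) - 1)
      = (Real.exp u * (1 - u)) * (γ * Real.exp (-1/γ) * h) := by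
        rw [hlog, hbr, hl_eq]; ring
    _ ≤ 1 * (γ * Real.exp (-1/γ) * h) := by
        apply mul_le_mul_of_nonneg_right h1 (by positivity)
    _ = γ * Real.exp (-1/γ) * h := one_mul _

lemma phiTerm_strictMono (l h : ℝ) (hl : 0 < l) (hlh : l ≤ h)
    {γ1 γ2 : ℝ} (h1 : 0 < γ1) (h12 : γ1 < γ2) :
    phiTerm l h γ1 < phiTerm l h γ2 := by
  have hh : 0 < h := hl.trans_le hlh
  have hγ2 : 0 < γ2 := h1.trans h12
  have hlogr : Real.log (l/h) ≤ 0 :=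
    Real.log_nonpos (le_of_lt (div_pos hl hh)) ((div_le_one hh).mpr hlh)
  have hexp : Real.exp (-1/γ1) < Real.exp (-1/γ2) := by
    apply Real.exp_lt_exp.mpr
    rw [neg_div, neg_div, neg_lt_neg_iff]
    exact one_div_lt_one_div_of_lt h1 h12
  have he1 : 0 < Real.exp (-1/γ1) := Real.exp_pos _
  have he2 : 0 < Real.exp (-1/γ2) := Real.exp_pos _
  unfold phiTerm
  by_cases hC1 : l < Real.exp (-1/γ1) * h
  · have hC2 : l < Real.exp (-1/γ2) * h := hC1.trans (by nlinarith)
    rw [if_pos hC1, if_pos hC2, if_pos hC1, if_pos hC2]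
    nlinarith [mul_pos (sub_pos.mpr h12) he1, mul_pos hγ2 (sub_pos.mpr hexp), mul_pos hh (mul_pos hγ2 (sub_pos.mpr hexp)), mul_pos hh (mul_pos (sub_pos.mpr h12) he1)]
  · by_cases hC2 : l < Real.exp (-1/γ2) * h
    · rw [if_neg hC1, if_pos hC2, if_neg hC1, if_pos hC2]
      have hb := b2_le_b1 l h γ2 hl hlh hγ2 (le_of_lt hC2)
      nlinarith [mul_pos (mul_pos hl (sub_pos.mpr h12))
        (show (0:ℝ) < 1 - Real.log (l/h) by linarith)]
    · rw [if_neg hC1, if_neg hC2, if_neg hC1, if_neg hC2]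
      nlinarith [mul_pos (mul_pos hl (sub_pos.mpr h12))
        (show (0:ℝ) < 1 - Real.log (l/h) by linarith)]

lemma phiTerm_continuousOn (l h : ℝ) (hl : 0 < l) (hlh : l ≤ h) :
    ContinuousOn (phiTerm l h) (Set.Ioi (0:ℝ)) := by
  have hh : 0 < h := hl.trans_le hlh
  have hr : 0 < l / h := div_pos hl hh
  set M : ℝ → ℝ := fun γ => max (l/h) (Real.exp (-1/γ)) with hM
  have he : ContinuousOn (fun γ : ℝ => Real.exp (-1/γ)) (Set.Ioi (0:ℝ)) :=
    Real.continuous_exp.comp_continuousOn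
      (continuousOn_const.div continuousOn_id (fun x hx => ne_of_gt hx))
  have hMc : ContinuousOn M (Set.Ioi (0:ℝ)) :=
    (continuous_const.max continuous_id).comp_continuousOn he
  have hMpos : ∀ γ ∈ Set.Ioi (0:ℝ), 0 < M γ := fun γ _ =>
    lt_of_lt_of_le hr (le_max_left _ _)
  have hlogM : ContinuousOn (fun γ => Real.log (M γ)) (Set.Ioi (0:ℝ)) :=
    hMc.log (fun γ hγ => ne_of_gt (hMpos γ hγ))
  have hF : ContinuousOn (fun γ => h * (M γ * (γ * (1 - Real.log (M γ)) - 1)))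
      (Set.Ioi (0:ℝ)) :=
    continuousOn_const.mul (hMc.mul
      (((continuousOn_id.mul (continuousOn_const.sub hlogM))).sub continuousOn_const))
  apply hF.congr
  intro γ hγ
  have hγ0 : (0:ℝ) < γ := hγ
  by_cases hC : l < Real.exp (-1/γ) * h
  · have hlt : l/h < Real.exp (-1/γ) := (div_lt_iff₀ hh).mpr (by linarith [hC])
    have hMe : M γ = Real.exp (-1/γ) := max_eq_right hlt.le
    simp only [phiTerm, if_pos hC, hMe, Real.log_exp]
    field_simp
    ring
  · have hle : Real.exp (-1/γ) ≤ l/h := (le_div_iff₀ hh).mpr (not_lt.mp hC)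
    have hMe : M γ = l/h := max_eq_left hle
    simp only [phiTerm, if_neg hC, hMe]
    field_simp
    ring

/-- `φ` is continuous and strictly increasing on `(0,1]`, and it has a
unique zero `γ* ∈ (0,1]`. -/
theorem stmt4 (J : ℕ) (hJ : 1 ≤ J) (lo hi : Fin J → ℝ)
    (hlo : ∀ j, 0 < lo j) (hlohi : ∀ j, lo j ≤ hi j) :
    ContinuousOn (phi J lo hi) (Set.Ioc 0 1) ∧
    StrictMonoOn (phi J lo hi) (Set.Ioc 0 1) ∧
    (∃! γ, γ ∈ Set.Ioc (0:ℝ) 1 ∧ phi J lo hi γ = 0) := by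
  haveI : Nonempty (Fin J) := ⟨⟨0, hJ⟩⟩
  have hh : ∀ j, 0 < hi j := fun j => (hlo j).trans_le (hlohi j)
  have hlogr : ∀ j, Real.log (lo j / hi j) ≤ 0 := fun j =>
    Real.log_nonpos (le_of_lt (div_pos (hlo j) (hh j))) ((div_le_one (hh j)).mpr (hlohi j))
  have hcont : ContinuousOn (phi J lo hi) (Set.Ioc 0 1) := by
    have hs : ContinuousOn (fun γ => ∑ j, phiTerm (lo j) (hi j) γ) (Set.Ioi (0:ℝ)) :=
      continuousOn_finset_sum _ (fun j _ => phiTerm_continuousOn _ _ (hlo j) (hlohi j))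
    exact (hs.mono Set.Ioc_subset_Ioi_self).congr (fun γ _ => phi_eq J lo hi γ)
  have hmono : StrictMonoOn (phi J lo hi) (Set.Ioc 0 1) := by
    intro γ1 hγ1 γ2 _ h12
    rw [phi_eq, phi_eq]
    exact Finset.sum_lt_sum_of_nonempty Finset.univ_nonempty
      (fun j _ => phiTerm_strictMono _ _ (hlo j) (hlohi j) hγ1.1 h12)
  refine ⟨hcont, hmono, ?_⟩
  -- choose a small `γ0` where `φ < 0`
  set m := Finset.univ.inf' Finset.univ_nonempty
    (fun j => 1/(1 - Real.log (lo j / hi j))) with hm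
  have hm_le : ∀ j, m ≤ 1/(1 - Real.log (lo j / hi j)) := fun j =>
    Finset.inf'_le _ (Finset.mem_univ j)
  have hm_pos : 0 < m := by
    rw [hm, Finset.lt_inf'_iff]
    intro j _
    have hp : 0 < 1 - Real.log (lo j / hi j) := by linarith [hlogr j]
    positivity
  set γ0 : ℝ := m/2 with hγ0
  have hγ0pos : 0 < γ0 := by positivity
  have hγ0lt1 : γ0 < 1 := by
    obtain ⟨j⟩ := (inferInstance : Nonempty (Fin J))
    have h1 : 1/(1 - Real.log (lo j / hi j)) ≤ 1 := by
      rw [div_le_one (by linarith [hlogr j])]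
      linarith [hlogr j]
    have := hm_le j
    rw [hγ0]; linarith
  have hkey : ∀ j, γ0 * (1 - Real.log (lo j / hi j)) ≤ 1/2 := by
    intro j
    have hpos : 0 < 1 - Real.log (lo j / hi j) := by linarith [hlogr j]
    have := (le_div_iff₀ hpos).mp (hm_le j)
    rw [hγ0]; nlinarith
  have hφγ0 : phi J lo hi γ0 < 0 := by
    rw [phi_eq]
    have hterm : ∀ j ∈ Finset.univ, phiTerm (lo j) (hi j) γ0 < 0 := by
      intro j _
      have hpos : 0 < 1 - Real.log (lo j / hi j) := by linarith [hlogr j]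
      have hk := hkey j
      -- show the condition fails at γ0
      have hlt : -1/γ0 < Real.log (lo j / hi j) := by
        rw [div_lt_iff₀ hγ0pos]
        nlinarith
      have hexp : Real.exp (-1/γ0) < lo j / hi j := by
        calc Real.exp (-1/γ0) < Real.exp (Real.log (lo j / hi j)) := Real.exp_lt_exp.mpr hlt
          _ = lo j / hi j := Real.exp_log (div_pos (hlo j) (hh j))
      have hC : ¬ (lo j < Real.exp (-1/γ0) * hi j) := by
        apply not_lt.mpr
        have : Real.exp (-1/γ0) * hi j < (lo j / hi j) * hi j :=
          mul_lt_mul_of_pos_right hexp (hh j)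
        rw [div_mul_cancel₀ _ (ne_of_gt (hh j))] at this
        linarith
      simp only [phiTerm, if_neg hC]
      have hbr : 0 < γ0 * Real.log (lo j / hi j) - γ0 + 1 := by nlinarith
      nlinarith [mul_pos (hlo j) hbr]
    calc (∑ j, phiTerm (lo j) (hi j) γ0) < ∑ _j : Fin J, (0:ℝ) :=
          Finset.sum_lt_sum_of_nonempty Finset.univ_nonempty hterm
      _ = 0 := by simp
  have hφ1 : 0 ≤ phi J lo hi 1 := by
    rw [phi_eq]
    apply Finset.sum_nonneg
    intro j _
    by_cases hC : lo j < Real.exp (-1/1) * hi j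
    · simp only [phiTerm, if_pos hC]
      nlinarith [Real.exp_pos (-1/(1:ℝ)), hh j]
    · simp only [phiTerm, if_neg hC]
      nlinarith [mul_nonpos_of_nonneg_of_nonpos (hlo j).le (hlogr j)]
  have hsub : Set.Icc γ0 1 ⊆ Set.Ioc 0 1 := fun x hx =>
    ⟨lt_of_lt_of_le hγ0pos hx.1, hx.2⟩
  have hivt := intermediate_value_Icc (le_of_lt hγ0lt1) (hcont.mono hsub)
  have h0mem : (0:ℝ) ∈ Set.Icc (phi J lo hi γ0) (phi J lo hi 1) := ⟨le_of_lt hφγ0, hφ1⟩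
  obtain ⟨γs, hγs, hγs0⟩ := hivt h0mem
  refine ⟨γs, ⟨hsub hγs, hγs0⟩, ?_⟩
  intro y hy
  exact hmono.injOn hy.1 (hsub hγs) (by rw [hy.2, hγs0])
end

section
/- Let γ* ∈ (0,1] be the unique solution of φ(γ*) = 0. Then t^{M_{γ*}}(v) ≥ γ*·∑_{j=1}^J v_j for every v ∈ V, and equality holds at the point v* ∈ V given by v*_j = e^{−1/γ*}·hi_j if j ∈ S(γ*) and v*_j = lo_j otherwise. Consequently, the minimum over v ∈ V of t^{M_{γ*}}(v)/(∑_j v_j) equals γ*; that is, the semi-separable mechanism M_{γ*} achieves worst-case performance ratio exactly γ*. -/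
open Real Finset

/-- The one-dimensional payment component of the semi-separable mechanism `M_γ`. -/
noncomputable def tcomp (γ lo hi x : ℝ) : ℝ :=
  if lo < Real.exp (-1/γ) * hi then γ * max (x - Real.exp (-1/γ) * hi) 0
  else γ * x + lo * (γ * (Real.log (lo / hi) - 1) + 1)

/-- Total payment `t^{M_γ}(v) = ∑ j, t_j(v_j)` of the semi-separable mechanism. -/
noncomputable def Tpay (J : ℕ) (lo hi : Fin J → ℝ) (γ : ℝ) (v : Fin J → ℝ) : ℝ :=
  ∑ j, tcomp γ (lo j) (hi j) (v j)

/-- Per-coordinate lower bound. -/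
lemma tcomp_ge (γ lo hi x : ℝ) (hγ : 0 < γ) :
    γ * x - ((if lo < Real.exp (-1/γ) * hi then γ * Real.exp (-1/γ) * hi else 0)
      - (if lo < Real.exp (-1/γ) * hi then 0
         else lo * (γ * Real.log (lo / hi) - γ + 1))) ≤ tcomp γ lo hi x := by
  unfold tcomp
  split_ifs with h
  · have h1 : γ * (x - Real.exp (-1/γ) * hi) ≤ γ * max (x - Real.exp (-1/γ) * hi) 0 :=
      mul_le_mul_of_nonneg_left (le_max_left _ _) hγ.le
    nlinarith
  · nlinarith [sq_nonneg (0:ℝ)]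

/-- Per-coordinate equality at the worst-case point. -/
lemma tcomp_eq (γ lo hi : ℝ) (hγ : 0 < γ) :
    tcomp γ lo hi (if lo < Real.exp (-1/γ) * hi then Real.exp (-1/γ) * hi else lo)
      = γ * (if lo < Real.exp (-1/γ) * hi then Real.exp (-1/γ) * hi else lo)
        - ((if lo < Real.exp (-1/γ) * hi then γ * Real.exp (-1/γ) * hi else 0)
           - (if lo < Real.exp (-1/γ) * hi then 0
              else lo * (γ * Real.log (lo / hi) - γ + 1))) := by
  unfold tcomp
  split_ifs with h
  · simp only [sub_self, max_self, mul_zero]; ring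
  · ring

/-- with `γ* ∈ (0,1]` the solution of `φ(γ*) = 0`, the payment of
`M_{γ*}` satisfies `t^{M_{γ*}}(v) ≥ γ*·∑ j, v j` on the box `V`, with equality at
the point `v*` with `v*_j = e^{−1/γ*}·hi_j` for `j ∈ S(γ*)` and `v*_j = lo_j`
otherwise; consequently `γ*` is the minimum of `t^{M_{γ*}}(v)/∑ j v j` over `V`. -/
theorem stmt5 (J : ℕ) (hJ : 1 ≤ J) (lo hi : Fin J → ℝ)
    (hlo : ∀ j, 0 < lo j) (hlohi : ∀ j, lo j ≤ hi j)
    (γ : ℝ) (hγ : γ ∈ Set.Ioc (0:ℝ) 1) (hzero : phi J lo hi γ = 0)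
    (vstar : Fin J → ℝ)
    (hvstar : ∀ j, vstar j =
      if lo j < Real.exp (-1/γ) * hi j then Real.exp (-1/γ) * hi j else lo j) :
    (∀ v : Fin J → ℝ, (∀ j, v j ∈ Set.Icc (lo j) (hi j)) →
      γ * ∑ j, v j ≤ Tpay J lo hi γ v) ∧
    ((∀ j, vstar j ∈ Set.Icc (lo j) (hi j)) ∧
      Tpay J lo hi γ vstar = γ * ∑ j, vstar j) ∧
    IsLeast {x : ℝ | ∃ v : Fin J → ℝ, (∀ j, v j ∈ Set.Icc (lo j) (hi j)) ∧
        x = Tpay J lo hi γ v / ∑ j, v j} γ := by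
  obtain ⟨hγ0, hγ1⟩ := hγ
  set D : Fin J → ℝ := fun j =>
    (if lo j < Real.exp (-1/γ) * hi j then γ * Real.exp (-1/γ) * hi j else 0)
      - (if lo j < Real.exp (-1/γ) * hi j then 0
         else lo j * (γ * Real.log (lo j / hi j) - γ + 1)) with hD
  have hsumD : ∑ j, D j = phi J lo hi γ := by
    unfold phi
    rw [Finset.mul_sum, ← Finset.sum_sub_distrib]
    refine Finset.sum_congr rfl fun j _ => ?_
    simp only [hD]
    split_ifs <;> ring
  -- part 1
  have part1 : ∀ v : Fin J → ℝ, (∀ j, v j ∈ Set.Icc (lo j) (hi j)) →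
      γ * ∑ j, v j ≤ Tpay J lo hi γ v := by
    intro v hv
    have : ∑ j, (γ * v j - D j) ≤ Tpay J lo hi γ v :=
      Finset.sum_le_sum fun j _ => tcomp_ge γ (lo j) (hi j) (v j) hγ0
    calc γ * ∑ j, v j = ∑ j, (γ * v j - D j) + phi J lo hi γ := by
            rw [← hsumD, Finset.sum_sub_distrib, Finset.mul_sum]; ring
      _ = ∑ j, (γ * v j - D j) := by rw [hzero, add_zero]
      _ ≤ _ := this
  -- vstar is in the box
  have hexple : Real.exp (-1/γ) ≤ 1 := by
    rw [Real.exp_le_one_iff, neg_div]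
    have : (0:ℝ) ≤ 1/γ := by positivity
    linarith
  have hbox : ∀ j, vstar j ∈ Set.Icc (lo j) (hi j) := by
    intro j
    rw [hvstar j]
    split_ifs with h
    · exact ⟨le_of_lt h, by nlinarith [(hlo j).trans_le (hlohi j)]⟩
    · exact ⟨le_refl _, hlohi j⟩
  -- equality at vstar
  have heq : Tpay J lo hi γ vstar = γ * ∑ j, vstar j := by
    unfold Tpay
    have : ∀ j, tcomp γ (lo j) (hi j) (vstar j) = γ * vstar j - D j := by
      intro j
      rw [hvstar j]
      exact tcomp_eq γ (lo j) (hi j) hγ0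
    rw [Finset.sum_congr rfl fun j _ => this j, Finset.sum_sub_distrib, hsumD, hzero,
      sub_zero, Finset.mul_sum]
  refine ⟨part1, ⟨hbox, heq⟩, ?_, ?_⟩
  · -- γ is in the set
    have hpos : 0 < ∑ j, vstar j := by
      have hne : (Finset.univ : Finset (Fin J)).Nonempty := by
        simpa [Finset.univ_nonempty_iff] using Fin.pos_iff_nonempty.mp hJ
      exact Finset.sum_pos (fun j _ => (hlo j).trans_le (hbox j).1) hne
    exact ⟨vstar, hbox, by rw [heq, mul_div_assoc, div_self hpos.ne', mul_one]⟩
  · rintro x ⟨v, hv, rfl⟩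
    have hpos : 0 < ∑ j, v j := by
      have hne : (Finset.univ : Finset (Fin J)).Nonempty := by
        simpa [Finset.univ_nonempty_iff] using Fin.pos_iff_nonempty.mp hJ
      exact Finset.sum_pos (fun j _ => (hlo j).trans_le (hv j).1) hne
    rw [le_div_iff₀ hpos]
    exact (mul_comm γ _).symm ▸ part1 v hv
end

section
/- Let γ* ∈ (0,1] be the unique solution of φ(γ*) = 0. Then for every γ ∈ (0,1], the infimum over v ∈ V of t^{M_γ}(v)/(∑_{j=1}^J v_j) is at most γ*. Hence, within the family {M_γ : γ ∈ (0,1]} of semi-separable mechanisms, the mechanism M_{γ*} maximizes the worst-case performance ratio inf_{v∈V} t^{M_γ}(v)/(∑_j v_j), and the maximal value is γ*. -/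
open Real Finset

lemma exp_neg_mul_le (y : ℝ) : Real.exp (-y) * (1 + y) ≤ 1 := by
  have h1 : y + 1 ≤ Real.exp y := Real.add_one_le_exp y
  have h2 : Real.exp (-y) * Real.exp y = 1 := by rw [← Real.exp_add]; simp
  nlinarith [Real.exp_pos (-y)]

lemma core_ratio (x y : ℝ) (hy : 0 < y) (hxy : y ≤ x) :
    y * (1 - Real.exp (-x)) ≤ x * (1 - Real.exp (-y)) := by
  have hd : 0 ≤ x - y := by linarith
  have h1 : 1 - (x - y) ≤ Real.exp (-(x - y)) := by
    have := Real.add_one_le_exp (-(x - y)); linarith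
  have h2 : Real.exp (-x) = Real.exp (-y) * Real.exp (-(x - y)) := by
    rw [← Real.exp_add]; ring_nf
  have h3 := exp_neg_mul_le y
  set a := Real.exp (-y) with ha
  set b := Real.exp (-(x - y)) with hb
  have ha0 : 0 < a := Real.exp_pos _
  have hb0 : 0 < b := Real.exp_pos _
  have hb1 : b ≤ 1 := Real.exp_le_one_iff.mpr (by linarith)
  have p1 : a * y * (1 - b) ≤ a * y * (x - y) :=
    mul_le_mul_of_nonneg_left (by linarith) (by positivity)
  have p2 : a * y * (x - y) ≤ (1 - a) * (x - y) :=
    mul_le_mul_of_nonneg_right (by nlinarith) hd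
  nlinarith [p1, p2]

lemma ratio_mono (γ δ : ℝ) (hγ : 0 < γ) (hδ : 0 < δ) (hγδ : γ ≤ δ) :
    γ * (1 - Real.exp (-1/γ)) ≤ δ * (1 - Real.exp (-1/δ)) := by
  have hx : (1:ℝ)/δ ≤ 1/γ := one_div_le_one_div_of_le hγ hγδ
  have h := core_ratio (1/γ) (1/δ) (by positivity) hx
  have e1 : -1/γ = -(1/γ) := by ring
  have e2 : -1/δ = -(1/δ) := by ring
  rw [e1, e2]
  have h2 := mul_le_mul_of_nonneg_left h (by positivity : (0:ℝ) ≤ γ * δ)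
  have hγ' : γ ≠ 0 := ne_of_gt hγ
  have hδ' : δ ≠ 0 := ne_of_gt hδ
  have e3 : γ * δ * (1/δ * (1 - Real.exp (-(1/γ)))) = γ * (1 - Real.exp (-(1/γ))) := by
    field_simp
  have e4 : γ * δ * (1/γ * (1 - Real.exp (-(1/δ)))) = δ * (1 - Real.exp (-(1/δ))) := by
    field_simp
  rw [e3, e4] at h2
  exact h2

lemma p_mono (γ u L : ℝ) (hγ : 0 < γ) (huL : u ≤ L) (hL : γ * L ≤ 1) :
    Real.exp (-L) * (1 - γ * (L + 1)) ≤ Real.exp (-u) * (1 - γ * (u + 1)) := by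
  set d := L - u with hdef
  have hd : 0 ≤ d := by simp [hdef]; linarith
  have hsplit : Real.exp (-L) = Real.exp (-u) * Real.exp (-d) := by
    rw [← Real.exp_add, hdef]; ring_nf
  have h1 : 1 - d ≤ Real.exp (-d) := by have := Real.add_one_le_exp (-d); linarith
  have h2 : Real.exp (-d) ≤ 1 := Real.exp_le_one_iff.mpr (by linarith)
  have hu : 0 < Real.exp (-u) := Real.exp_pos _
  rw [hsplit]
  have key : Real.exp (-d) * (1 - γ * (L + 1)) ≤ 1 - γ * (u + 1) := by
    have hA : 1 - γ * (L + 1) = (1 - γ * (u + 1)) - γ * d := by simp [hdef]; ring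
    rcases le_or_gt 0 (1 - γ * (u + 1)) with hc | hc
    · nlinarith [Real.exp_pos (-d), mul_nonneg hγ.le hd]
    · have hγL : γ * u + γ * d ≤ 1 := by nlinarith
      nlinarith [mul_nonneg hγ.le hd, Real.exp_pos (-d)]
  nlinarith [key, hu]

lemma tcomp_nonneg (γ l h x : ℝ) (hγ0 : 0 < γ) (hl : 0 < l) (hlh : l ≤ h) (hx : l ≤ x) :
    0 ≤ tcomp γ l h x := by
  rw [tcomp]
  split_ifs with hc
  · exact mul_nonneg hγ0.le (le_max_right _ _)
  · have hh : 0 < h := lt_of_lt_of_le hl hlh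
    push_neg at hc
    have h1 : -(1/γ) ≤ Real.log (l/h) := by
      rw [Real.le_log_iff_exp_le (div_pos hl hh)]
      rw [le_div_iff₀ hh]
      have : -1/γ = -(1/γ) := by ring
      rw [← this]; exact hc
    have h2 : -1 ≤ γ * Real.log (l/h) := by
      have := mul_le_mul_of_nonneg_left h1 hγ0.le
      have e : γ * -(1/γ) = -1 := by field_simp
      linarith [e ▸ this]
    nlinarith [mul_le_mul_of_nonneg_left hx hγ0.le]

-- the per-coordinate bound function (= per-coordinate contribution to -phi(γs))
noncomputable def psi (γs l h : ℝ) : ℝ :=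
  if l < Real.exp (-1/γs) * h then -(γs * (Real.exp (-1/γs) * h))
  else l * (γs * Real.log (l / h) - γs + 1)

lemma key_lower (γs l h x : ℝ) (hγs0 : 0 < γs) (hl : 0 < l) (hlh : l ≤ h)
    (hx : x ∈ Set.Icc l h) :
    psi γs l h ≤ tcomp γs l h x - γs * x := by
  rw [psi, tcomp]
  split_ifs with hc
  · have h1 : x - Real.exp (-1/γs) * h ≤ max (x - Real.exp (-1/γs) * h) 0 := le_max_left _ _
    nlinarith [mul_le_mul_of_nonneg_left h1 hγs0.le]
  · ring_nf
    nlinarith [hx.1]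

lemma key_upper (γ γs l h : ℝ) (hγ0 : 0 < γ) (hγ1 : γ ≤ 1) (hγs0 : 0 < γs) (hγs1 : γs ≤ 1)
    (hl : 0 < l) (hlh : l ≤ h) :
    ∃ x ∈ Set.Icc l h, tcomp γ l h x - γs * x ≤ psi γs l h := by
  have hh : 0 < h := lt_of_lt_of_le hl hlh
  simp only [psi, tcomp]
  set E := Real.exp (-1/γ) with hE
  set Es := Real.exp (-1/γs) with hEs
  have hE0 : 0 < E := Real.exp_pos _
  have hEs0 : 0 < Es := Real.exp_pos _
  have hE1 : E ≤ 1 := Real.exp_le_one_iff.mpr (by rw [neg_div]; exact neg_nonpos.mpr (by positivity))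
  have hEs1 : Es ≤ 1 := Real.exp_le_one_iff.mpr (by rw [neg_div]; exact neg_nonpos.mpr (by positivity))
  clear_value E Es
  by_cases hA : l < E * h
  · by_cases hAs : l < Es * h
    · rcases le_or_gt γs γ with hord | hord
      · -- x = E*h
        refine ⟨E * h, ⟨hA.le, by nlinarith⟩, ?_⟩
        simp only [if_pos hA, if_pos hAs, sub_self, max_self, mul_zero]
        have : Es ≤ E := by
          rw [hE, hEs]
          exact Real.exp_le_exp.mpr (by
            rw [neg_div, neg_div, neg_le_neg_iff]
            exact one_div_le_one_div_of_le hγs0 hord)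
        nlinarith [mul_le_mul_of_nonneg_left (mul_le_mul_of_nonneg_right this hh.le) hγs0.le]
      · -- x = h
        refine ⟨h, ⟨hlh, le_refl h⟩, ?_⟩
        simp only [if_pos hA, if_pos hAs]
        have hmax : max (h - E * h) 0 = h - E * h := max_eq_left (by nlinarith)
        rw [hmax]
        have hrm := ratio_mono γ γs hγ0 hγs0 hord.le
        rw [← hE, ← hEs] at hrm
        nlinarith [mul_le_mul_of_nonneg_right hrm hh.le]
    · -- j in S(γ), not in S(γs): x = E*h
      push_neg at hAs
      refine ⟨E * h, ⟨hA.le, by nlinarith⟩, ?_⟩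
      simp only [if_pos hA, if_neg (not_lt.mpr hAs), sub_self, max_self, mul_zero]
      -- goal: 0 - γs*(E*h) ≤ l*(γs * log(l/h) - γs + 1)
      have h1 : -(1/γs) ≤ Real.log (l/h) := by
        rw [Real.le_log_iff_exp_le (div_pos hl hh)]
        rw [le_div_iff₀ hh]
        have e : -1/γs = -(1/γs) := by ring
        rw [← e, ← hEs]; exact hAs
      have h2 : -1 ≤ γs * Real.log (l/h) := by
        have := mul_le_mul_of_nonneg_left h1 hγs0.le
        have e : γs * -(1/γs) = -1 := by field_simp
        linarith [e ▸ this]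
      -- RHS ≥ l*(-1 - γs + 1) = -γs l ≥ -γs E h  since l < E h
      nlinarith [mul_le_mul_of_nonneg_left h2 hl.le]
  · push_neg at hA
    by_cases hAs : l < Es * h
    · -- hard case: γ < γs, x = h
      refine ⟨h, ⟨hlh, le_refl h⟩, ?_⟩
      simp only [if_neg (not_lt.mpr hA), if_pos hAs]
      set r := Real.log (l / h) with hr
      have hlr : l = h * Real.exp r := by
        rw [hr, Real.exp_log (div_pos hl hh)]; field_simp
      set L := -r with hL
      have hexp : Real.exp r = Real.exp (-L) := by rw [hL]; ring_nf
      clear_value r L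
      -- constraints
      have hgl : γ * L ≤ 1 := by
        -- l ≥ E h ⟹ r ≥ -1/γ ⟹ L ≤ 1/γ
        have h1 : -(1/γ) ≤ r := by
          rw [hr, Real.le_log_iff_exp_le (div_pos hl hh), le_div_iff₀ hh]
          have e : -1/γ = -(1/γ) := by ring
          rw [← e, ← hE]; exact hA
        have : L ≤ 1/γ := by rw [hL]; linarith
        calc γ * L ≤ γ * (1/γ) := mul_le_mul_of_nonneg_left this hγ0.le
          _ = 1 := by field_simp
      have huL : 1/γs ≤ L := by
        -- l < Es h ⟹ r < -(1/γs)
        have h1 : r < -(1/γs) := by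
          rw [hr]
          have : Real.log (l/h) < Real.log Es := by
            apply Real.log_lt_log (div_pos hl hh)
            rw [div_lt_iff₀ hh]; exact hAs
          rw [hEs, Real.log_exp] at this
          linarith [this, (by ring : -1/γs = -(1/γs))]
        rw [hL]; linarith
      have hEsu : Es = Real.exp (-(1/γs)) := by rw [hEs]; ring_nf
      have hp := p_mono γ (1/γs) L hγ0 huL hgl
      rw [← hEsu] at hp
      -- hp : exp(-L)*(1-γ(L+1)) ≤ Es*(1-γ(1/γs+1))
      have hEs2 : Es * (1 + γs) ≤ γs := by
        have h1 := Real.add_one_le_exp (1/γs)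
        have h2 : Es * Real.exp (1/γs) = 1 := by
          rw [hEsu, ← Real.exp_add]; simp
        have h5 : γs * Es * (1/γs + 1) ≤ γs * Es * Real.exp (1/γs) :=
          mul_le_mul_of_nonneg_left h1 (by positivity)
        have h6 : γs * Es * Real.exp (1/γs) = γs := by
          rw [mul_assoc, h2, mul_one]
        have h7 : γs * Es * (1/γs + 1) = Es * (1 + γs) := by field_simp
        linarith
      have hord : γ < γs := by
        by_contra hcon
        push_neg at hcon
        have : Es ≤ E := by
          rw [hE, hEs]
          exact Real.exp_le_exp.mpr (by
            rw [neg_div, neg_div, neg_le_neg_iff]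
            exact one_div_le_one_div_of_le hγs0 hcon)
        nlinarith
      -- goal: γ*h + l*(γ*(r-1)+1) - γs*h ≤ -(γs*(Es*h))
      -- l*(γ*(r-1)+1) = h*exp(-L)*(1 - γ*(L+1))
      have e1 : l * (γ * (r - 1) + 1) = h * (Real.exp (-L) * (1 - γ * (L + 1))) := by
        rw [hlr, hexp, hL]; ring
      rw [e1]
      have step : h * (Real.exp (-L) * (1 - γ * (L + 1))) ≤
          h * (Es * (1 - γ * (1/γs + 1))) :=
        mul_le_mul_of_nonneg_left hp hh.le
      -- final: γ*h + h*Es*(1 - γ/γs - γ) - γs*h + γs*Es*h ≤ 0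
      have final : γ + Es * (1 - γ * (1/γs + 1)) - γs + γs * Es ≤ 0 := by
        have e2 : γs * (γ + Es * (1 - γ * (1/γs + 1)) - γs + γs * Es)
            = (γs - γ) * (Es * (1 + γs) - γs) := by field_simp; ring
        have h3 : (γs - γ) * (Es * (1 + γs) - γs) ≤ 0 :=
          mul_nonpos_of_nonneg_of_nonpos (by linarith) (by linarith)
        have h4 : γs * (γ + Es * (1 - γ * (1/γs + 1)) - γs + γs * Es) ≤ γs * 0 := by
          rw [mul_zero, e2]; exact h3
        exact le_of_mul_le_mul_left h4 hγs0
      nlinarith [mul_le_mul_of_nonneg_left final hh.le, step]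
    · -- both not in S
      push_neg at hAs
      rcases le_or_gt γs γ with hord | hord
      · -- x = l
        refine ⟨l, ⟨le_refl l, hlh⟩, ?_⟩
        simp only [if_neg (not_lt.mpr hA), if_neg (not_lt.mpr hAs)]
        have hr0 : Real.log (l/h) ≤ 0 :=
          Real.log_nonpos (by positivity) (by rw [div_le_one hh]; exact hlh)
        have hint : 0 ≤ (γ - γs) * (-(Real.log (l/h))) * l :=
          mul_nonneg (mul_nonneg (sub_nonneg.mpr hord) (neg_nonneg.mpr hr0)) hl.le
        nlinarith [hint]
      · -- x = h
        refine ⟨h, ⟨hlh, le_refl h⟩, ?_⟩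
        simp only [if_neg (not_lt.mpr hA), if_neg (not_lt.mpr hAs)]
        have hlog : Real.log (h/l) ≤ h/l - 1 := Real.log_le_sub_one_of_pos (by positivity)
        have e : Real.log (l/h) = -Real.log (h/l) := by
          rw [← Real.log_inv]; congr 1; field_simp
        have h1 : l * Real.log (h/l) ≤ h - l := by
          have h2 := mul_le_mul_of_nonneg_left hlog hl.le
          have e2 : l * (h/l - 1) = h - l := by field_simp
          rw [e2] at h2; linarith
        have h3 : (0:ℝ) ≤ h + l * Real.log (l/h) - l := by
          rw [e]; linarith [h1]
        have hint : 0 ≤ (γs - γ) * (h + l * Real.log (l/h) - l) :=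
          mul_nonneg (sub_nonneg.mpr hord.le) h3
        linarith [hint]

lemma psi_sum (J : ℕ) (lo hi : Fin J → ℝ) (γs : ℝ) :
    ∑ j, psi γs (lo j) (hi j) = - phi J lo hi γs := by
  rw [phi, neg_sub, Finset.mul_sum, ← Finset.sum_sub_distrib]
  apply Finset.sum_congr rfl
  intro j _
  rw [psi]
  split_ifs <;> ring


/-- with `γ* ∈ (0,1]` the solution of `φ(γ*) = 0`, for every
`γ ∈ (0,1]` the worst-case performance ratio `inf_{v∈V} t^{M_γ}(v)/∑ j v j` is at
most `γ*`; hence within the family `{M_γ : γ ∈ (0,1]}` the mechanism `M_{γ*}`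
maximizes the worst-case performance ratio, and the maximal value is `γ*`. -/
theorem stmt6 (J : ℕ) (hJ : 1 ≤ J) (lo hi : Fin J → ℝ)
    (hlo : ∀ j, 0 < lo j) (hlohi : ∀ j, lo j ≤ hi j)
    (γstar : ℝ) (hγ : γstar ∈ Set.Ioc (0:ℝ) 1) (hzero : phi J lo hi γstar = 0) :
    (∀ γ ∈ Set.Ioc (0:ℝ) 1,
      sInf {x : ℝ | ∃ v : Fin J → ℝ, (∀ j, v j ∈ Set.Icc (lo j) (hi j)) ∧
          x = Tpay J lo hi γ v / ∑ j, v j} ≤ γstar) ∧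
    IsGreatest {y : ℝ | ∃ γ ∈ Set.Ioc (0:ℝ) 1,
        y = sInf {x : ℝ | ∃ v : Fin J → ℝ, (∀ j, v j ∈ Set.Icc (lo j) (hi j)) ∧
          x = Tpay J lo hi γ v / ∑ j, v j}} γstar := by
  obtain ⟨hγs0, hγs1⟩ := hγ
  haveI : Nonempty (Fin J) := ⟨⟨0, hJ⟩⟩
  have hsumpos : ∀ v : Fin J → ℝ, (∀ j, v j ∈ Set.Icc (lo j) (hi j)) → 0 < ∑ j, v j :=
    fun v hv => Finset.sum_pos (fun j _ => lt_of_lt_of_le (hlo j) (hv j).1)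
      Finset.univ_nonempty
  have hbdd : ∀ γ ∈ Set.Ioc (0:ℝ) 1,
      BddBelow {x : ℝ | ∃ v : Fin J → ℝ, (∀ j, v j ∈ Set.Icc (lo j) (hi j)) ∧
        x = Tpay J lo hi γ v / ∑ j, v j} := by
    intro γ hγ'
    refine ⟨0, fun x hx => ?_⟩
    obtain ⟨v, hv, rfl⟩ := hx
    apply div_nonneg _ (hsumpos v hv).le
    exact Finset.sum_nonneg fun j _ =>
      tcomp_nonneg _ _ _ _ hγ'.1 (hlo j) (hlohi j) (hv j).1
  have hub : ∀ γ ∈ Set.Ioc (0:ℝ) 1,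
      sInf {x : ℝ | ∃ v : Fin J → ℝ, (∀ j, v j ∈ Set.Icc (lo j) (hi j)) ∧
          x = Tpay J lo hi γ v / ∑ j, v j} ≤ γstar := by
    intro γ hγ'
    have hchoice : ∀ j : Fin J, ∃ x ∈ Set.Icc (lo j) (hi j),
        tcomp γ (lo j) (hi j) x - γstar * x ≤ psi γstar (lo j) (hi j) :=
      fun j => key_upper γ γstar (lo j) (hi j) hγ'.1 hγ'.2 hγs0 hγs1 (hlo j) (hlohi j)
    choose v hv1 hv2 using hchoice
    have hsum : ∑ j, (tcomp γ (lo j) (hi j) (v j) - γstar * v j)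
        ≤ ∑ j, psi γstar (lo j) (hi j) := Finset.sum_le_sum fun j _ => hv2 j
    rw [psi_sum, hzero, neg_zero, Finset.sum_sub_distrib] at hsum
    have hpos := hsumpos v hv1
    have hratio : Tpay J lo hi γ v / ∑ j, v j ≤ γstar := by
      rw [div_le_iff₀ hpos, Tpay]
      have : ∑ j, γstar * v j = γstar * ∑ j, v j := by rw [Finset.mul_sum]
      linarith [hsum, this.symm ▸ hsum]
    exact le_trans (csInf_le (hbdd γ hγ') ⟨v, hv1, rfl⟩) hratio
  have hlb : sInf {x : ℝ | ∃ v : Fin J → ℝ, (∀ j, v j ∈ Set.Icc (lo j) (hi j)) ∧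
      x = Tpay J lo hi γstar v / ∑ j, v j} = γstar := by
    apply le_antisymm (hub γstar ⟨hγs0, hγs1⟩)
    refine le_csInf ⟨Tpay J lo hi γstar lo / ∑ j, lo j,
      ⟨lo, fun j => ⟨le_refl _, hlohi j⟩, rfl⟩⟩ ?_
    rintro x ⟨v, hv, rfl⟩
    have hpos := hsumpos v hv
    rw [le_div_iff₀ hpos]
    have hsum : ∑ j, psi γstar (lo j) (hi j)
        ≤ ∑ j, (tcomp γstar (lo j) (hi j) (v j) - γstar * v j) :=
      Finset.sum_le_sum fun j _ =>
        key_lower γstar (lo j) (hi j) (v j) hγs0 (hlo j) (hlohi j) (hv j)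
    rw [psi_sum, hzero, neg_zero, Finset.sum_sub_distrib] at hsum
    rw [Tpay]
    have : ∑ j, γstar * v j = γstar * ∑ j, v j := by rw [Finset.mul_sum]
    linarith [this ▸ hsum]
  refine ⟨hub, ⟨γstar, ⟨hγs0, hγs1⟩, hlb.symm⟩, ?_⟩
  rintro y ⟨γ, hγ', rfl⟩
  exact hub γ hγ'
end

section
/- Let J = 2 with 0 < lo_1 ≤ hi_1 and 0 < lo_2 ≤ hi_2, sorted so that lo_1/hi_1 ≤ lo_2/hi_2, and assume ln((lo_2·hi_1)/(hi_2·lo_1)) − 1 > lo_1/lo_2. Let w ≥ 0 satisfy w·e^{w} = hi_1/(e·hi_2) (the Lambert W value). Then γ := (w + ln(hi_2/lo_2) + 1)^{−1} lies in (0,1] and satisfies φ(γ) = 0; in other words, the optimal competitive ratio of the two-item problem equals (W(hi_1/(e·hi_2)) + ln(hi_2/lo_2) + 1)^{−1}. -/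
open Real Finset

/-- two items sorted with `lo 0/hi 0 ≤ lo 1/hi 1`, in the regime
`ln((lo 1·hi 0)/(hi 1·lo 0)) − 1 > lo 0/lo 1`.  With `w ≥ 0` the Lambert-W value
satisfying `w·e^w = hi 0/(e·hi 1)`, the number
`γ = (w + ln(hi 1/lo 1) + 1)⁻¹` lies in `(0,1]` and satisfies `φ(γ) = 0`, i.e. it
is the optimal competitive ratio of the two-item problem. -/
theorem stmt7 (lo hi : Fin 2 → ℝ)
    (hlo : ∀ j, 0 < lo j) (hlohi : ∀ j, lo j ≤ hi j)
    (hsorted : lo 0 / hi 0 ≤ lo 1 / hi 1)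
    (hcond : lo 0 / lo 1 < Real.log ((lo 1 * hi 0) / (hi 1 * lo 0)) - 1)
    (w : ℝ) (hw0 : 0 ≤ w) (hw : w * Real.exp w = hi 0 / (Real.exp 1 * hi 1))
    (γ : ℝ) (hγdef : γ = (w + Real.log (hi 1 / lo 1) + 1)⁻¹) :
    γ ∈ Set.Ioc (0:ℝ) 1 ∧ phi 2 lo hi γ = 0 := by
  have ha : 0 < lo 0 := hlo 0
  have hb : 0 < lo 1 := hlo 1
  have hA : 0 < hi 0 := lt_of_lt_of_le ha (hlohi 0)
  have hB : 0 < hi 1 := lt_of_lt_of_le hb (hlohi 1)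
  -- hi 0 = w * exp w * (exp 1 * hi 1)
  have hw' : w * Real.exp w * (Real.exp 1 * hi 1) = hi 0 := by
    rw [hw]; field_simp
  -- lo 0 / lo 1 < w
  have hratio : lo 0 / lo 1 < w := by
    by_contra h
    push_neg at h
    have hpos : 0 < (lo 1 * hi 0) / (hi 1 * lo 0) := by positivity
    have h1 : Real.exp (1 + lo 0 / lo 1) < (lo 1 * hi 0) / (hi 1 * lo 0) := by
      rw [← Real.lt_log_iff_exp_lt hpos]; linarith
    rw [Real.exp_add] at h1
    have h1' : Real.exp (lo 0 / lo 1) < (lo 1 * hi 0) / (hi 1 * lo 0) / Real.exp 1 := by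
      rw [lt_div_iff₀ (Real.exp_pos 1), mul_comm]; exact h1
    have h3 : lo 0 / lo 1 * Real.exp (lo 0 / lo 1)
        < lo 0 / lo 1 * ((lo 1 * hi 0) / (hi 1 * lo 0) / Real.exp 1) :=
      mul_lt_mul_of_pos_left h1' (by positivity)
    have heq : lo 0 / lo 1 * ((lo 1 * hi 0) / (hi 1 * lo 0) / Real.exp 1)
        = hi 0 / (Real.exp 1 * hi 1) := by
      field_simp
    have h2 : w * Real.exp w ≤ lo 0 / lo 1 * Real.exp (lo 0 / lo 1) :=
      mul_le_mul h (Real.exp_le_exp.2 h) (Real.exp_pos _).le (by positivity)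
    rw [heq, ← hw] at h3
    linarith
  have hwpos : 0 < w := lt_of_le_of_lt (by positivity) hratio
  have hL : 0 ≤ Real.log (hi 1 / lo 1) :=
    Real.log_nonneg ((one_le_div hb).2 (hlohi 1))
  have ht1 : (1:ℝ) ≤ w + Real.log (hi 1 / lo 1) + 1 := by linarith
  have htpos : (0:ℝ) < w + Real.log (hi 1 / lo 1) + 1 := by linarith
  have hγpos : 0 < γ := by rw [hγdef]; positivity
  have hγ1 : γ ≤ 1 := by rw [hγdef]; exact inv_le_one_of_one_le₀ ht1
  have hγt : γ * (w + Real.log (hi 1 / lo 1) + 1) = 1 := by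
    rw [hγdef]; field_simp
  -- exp (-1/γ) = exp (-w-1) * (lo 1 / hi 1)
  have hinv : -1/γ = -(w + Real.log (hi 1 / lo 1) + 1) := by
    rw [hγdef]; field_simp
  have hexp : Real.exp (-1/γ) = Real.exp (-w-1) * (lo 1 / hi 1) := by
    rw [hinv, show -(w + Real.log (hi 1 / lo 1) + 1)
        = (-w-1) + (-(Real.log (hi 1 / lo 1))) by ring,
      Real.exp_add, Real.exp_neg, Real.exp_log (by positivity)]
    rw [inv_div]
  -- key : exp(-1/γ) * hi 0 = w * lo 1
  have hkey : Real.exp (-1/γ) * hi 0 = w * lo 1 := by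
    rw [hexp, ← hw']
    rw [show -w - 1 = -(w + 1) by ring, Real.exp_neg, Real.exp_add]
    field_simp
  have m0 : lo 0 < Real.exp (-1/γ) * hi 0 := by
    rw [hkey]; exact (div_lt_iff₀ hb).1 hratio
  have m1 : ¬ (lo 1 < Real.exp (-1/γ) * hi 1) := by
    push_neg
    rw [hexp]
    have h1 : Real.exp (-w-1) ≤ 1 := Real.exp_le_one_iff.2 (by linarith)
    calc Real.exp (-w-1) * (lo 1 / hi 1) * hi 1 = Real.exp (-w-1) * lo 1 := by
          field_simp
      _ ≤ 1 * lo 1 := by nlinarith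
      _ = lo 1 := one_mul _
  refine ⟨⟨hγpos, hγ1⟩, ?_⟩
  unfold phi
  rw [Fin.sum_univ_two, Fin.sum_univ_two, if_pos m0, if_neg m1, if_pos m0, if_neg m1]
  have hlog : Real.log (lo 1 / hi 1) = -Real.log (hi 1 / lo 1) := by
    rw [← Real.log_inv, inv_div]
  rw [hlog, add_zero, zero_add, mul_assoc, hkey]
  linear_combination (lo 1) * hγt
end

section
/- Let J = 2 with 0 < lo_1 ≤ hi_1 and 0 < lo_2 ≤ hi_2, sorted so that lo_1/hi_1 ≤ lo_2/hi_2, and assume ln((lo_2·hi_1)/(hi_2·lo_1)) − 1 ≤ lo_1/lo_2. Then γ := (lo_1 + lo_2)/(lo_1·(1 + ln(hi_1/lo_1)) + lo_2·(1 + ln(hi_2/lo_2))) lies in (0,1] and satisfies φ(γ) = 0; in other words, the optimal competitive ratio of the two-item problem equals (lo_1 + lo_2)/(∑_{j=1}^2 lo_j·(1 + ln(hi_j/lo_j))). -/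
open Real Finset

set_option maxHeartbeats 1000000 in
/-- two items sorted with `lo 0/hi 0 ≤ lo 1/hi 1`, in the regime
`ln((lo 1·hi 0)/(hi 1·lo 0)) − 1 ≤ lo 0/lo 1`.  The number
`γ = (lo 0 + lo 1)/(lo 0·(1 + ln(hi 0/lo 0)) + lo 1·(1 + ln(hi 1/lo 1)))`
lies in `(0,1]` and satisfies `φ(γ) = 0`, i.e. it is the optimal competitive
ratio of the two-item problem. -/
theorem stmt8 (lo hi : Fin 2 → ℝ)
    (hlo : ∀ j, 0 < lo j) (hlohi : ∀ j, lo j ≤ hi j)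
    (hsorted : lo 0 / hi 0 ≤ lo 1 / hi 1)
    (hcond : Real.log ((lo 1 * hi 0) / (hi 1 * lo 0)) - 1 ≤ lo 0 / lo 1)
    (γ : ℝ) (hγdef : γ = (lo 0 + lo 1) /
      (lo 0 * (1 + Real.log (hi 0 / lo 0)) + lo 1 * (1 + Real.log (hi 1 / lo 1)))) :
    γ ∈ Set.Ioc (0:ℝ) 1 ∧ phi 2 lo hi γ = 0 := by
  have h0 : 0 < lo 0 := hlo 0
  have h1 : 0 < lo 1 := hlo 1
  have H0 : 0 < hi 0 := lt_of_lt_of_le h0 (hlohi 0)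
  have H1 : 0 < hi 1 := lt_of_lt_of_le h1 (hlohi 1)
  have e0 : Real.log (hi 0 / lo 0) = Real.log (hi 0) - Real.log (lo 0) :=
    Real.log_div H0.ne' h0.ne'
  have e1 : Real.log (hi 1 / lo 1) = Real.log (hi 1) - Real.log (lo 1) :=
    Real.log_div H1.ne' h1.ne'
  have f0 : Real.log (lo 0 / hi 0) = Real.log (lo 0) - Real.log (hi 0) :=
    Real.log_div h0.ne' H0.ne'
  have f1 : Real.log (lo 1 / hi 1) = Real.log (lo 1) - Real.log (hi 1) :=
    Real.log_div h1.ne' H1.ne'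
  have hL0nn : 0 ≤ Real.log (hi 0) - Real.log (lo 0) := by
    rw [← e0]; exact Real.log_nonneg ((one_le_div h0).mpr (hlohi 0))
  have hL1nn : 0 ≤ Real.log (hi 1) - Real.log (lo 1) := by
    rw [← e1]; exact Real.log_nonneg ((one_le_div h1).mpr (hlohi 1))
  have hab : 0 < lo 0 + lo 1 := by linarith
  have hDpos : 0 < lo 0 * (1 + Real.log (hi 0 / lo 0)) + lo 1 * (1 + Real.log (hi 1 / lo 1)) := by
    rw [e0, e1]; nlinarith
  have hγpos : 0 < γ := by rw [hγdef]; exact div_pos hab hDpos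
  have hγle : γ ≤ 1 := by
    rw [hγdef, div_le_one hDpos, e0, e1]; nlinarith
  -- rewrite hcond
  have hlogdiff : Real.log ((lo 1 * hi 0) / (hi 1 * lo 0)) =
      (Real.log (hi 0) - Real.log (lo 0)) - (Real.log (hi 1) - Real.log (lo 1)) := by
    rw [Real.log_div (by positivity) (by positivity),
      Real.log_mul h1.ne' H0.ne', Real.log_mul H1.ne' h0.ne']; ring
  have hkey0 : (Real.log (hi 0) - Real.log (lo 0)) - (Real.log (hi 1) - Real.log (lo 1))
      ≤ lo 0 / lo 1 + 1 := by rw [← hlogdiff]; linarith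
  have hk0 : ((Real.log (hi 0) - Real.log (lo 0)) - (Real.log (hi 1) - Real.log (lo 1))) * lo 1
      ≤ lo 0 + lo 1 := by
    have := mul_le_mul_of_nonneg_right hkey0 h1.le
    rwa [add_mul, div_mul_cancel₀ _ h1.ne', one_mul] at this
  have hL1le : Real.log (hi 1) - Real.log (lo 1) ≤ Real.log (hi 0) - Real.log (lo 0) := by
    have hab' : lo 0 * hi 1 ≤ lo 1 * hi 0 := (div_le_div_iff₀ H0 H1).mp hsorted
    have h2 : hi 1 / lo 1 ≤ hi 0 / lo 0 := by
      rw [div_le_div_iff₀ h1 h0]; nlinarith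
    have := Real.log_le_log (by positivity) h2
    rw [e0, e1] at this; linarith
  have hγinv : 1 / γ = (lo 0 * (1 + Real.log (hi 0 / lo 0)) + lo 1 * (1 + Real.log (hi 1 / lo 1)))
      / (lo 0 + lo 1) := by rw [hγdef, one_div_div]
  -- the bounds
  have hE0 : Real.exp (-1/γ) * hi 0 ≤ lo 0 := by
    have h' : -1/γ ≤ Real.log (lo 0 / hi 0) := by
      rw [f0, neg_div, hγinv, neg_le, neg_sub, le_div_iff₀ hab, e0, e1]
      nlinarith [hk0]
    have := (Real.le_log_iff_exp_le (div_pos h0 H0)).mp h'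
    calc Real.exp (-1/γ) * hi 0 ≤ lo 0 / hi 0 * hi 0 :=
          mul_le_mul_of_nonneg_right this H0.le
      _ = lo 0 := by field_simp
  have hE1 : Real.exp (-1/γ) * hi 1 ≤ lo 1 := by
    have h' : -1/γ ≤ Real.log (lo 1 / hi 1) := by
      rw [f1, neg_div, hγinv, neg_le, neg_sub, le_div_iff₀ hab, e0, e1]
      nlinarith [mul_le_mul_of_nonneg_left hL1le h0.le]
    have := (Real.le_log_iff_exp_le (div_pos h1 H1)).mp h'
    calc Real.exp (-1/γ) * hi 1 ≤ lo 1 / hi 1 * hi 1 :=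
          mul_le_mul_of_nonneg_right this H1.le
      _ = lo 1 := by field_simp
  refine ⟨⟨hγpos, hγle⟩, ?_⟩
  have hγD : γ * (lo 0 * (1 + Real.log (hi 0 / lo 0)) + lo 1 * (1 + Real.log (hi 1 / lo 1)))
      = lo 0 + lo 1 := by
    rw [hγdef]; field_simp
  rw [phi, Fin.sum_univ_two, Fin.sum_univ_two, if_neg (not_lt.mpr hE0),
    if_neg (not_lt.mpr hE1), if_neg (not_lt.mpr hE0), if_neg (not_lt.mpr hE1)]
  rw [e0, e1] at hγD
  rw [f0, f1]
  linear_combination hγD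
end

section
/- Let J ≥ 2, hi_j > 0 for j = 1,…,J−1, 0 < lo_J ≤ hi_J, and consider the box V = ∏_{j=1}^{J−1} [0, hi_j] × [lo_J, hi_J]. Set S = ∑_{j=1}^{J−1} hi_j (assume S > 0), r = 1/(1 + ln(hi_J/lo_J)), and let w ≥ 0 satisfy w·e^{w} = S/(e·hi_J). Then: (i) the separable mechanism, whose payment on this box is t_sep(v) = r·v_J, satisfies inf_{v∈V} t_sep(v)/(∑_{j=1}^J v_j) = r·lo_J/(S + lo_J); (ii) γ := (1/r + w)^{−1} lies in (0,1] and satisfies γ·e^{−1/γ}·S − lo_J·(γ·ln(lo_J/hi_J) − γ + 1) = 0, so γ is the competitive ratio of the optimal semi-separable mechanism for this instance; and (iii) the ratio of these two competitive ratios equals (r·lo_J/(S + lo_J))/γ = (1 + r·w)/(1 + S/lo_J). -/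
open Real Finset

/-- comparison of separable and semi-separable mechanisms on the box
`∏_{j<J-1} [0, hi_j] × [lo_J, hi_J]` (here the first `J−1 = n` products have
bounds `[0, hi j]` and the last product has bounds `[loJ, hiJ]`).
(i) the separable mechanism with payment `t_sep(v) = r·v_J` has worst-case
performance ratio `r·loJ/(S + loJ)`; (ii) `γ = (1/r + w)⁻¹ ∈ (0,1]` solves the
defining equation `γ·e^{−1/γ}·S − loJ·(γ·ln(loJ/hiJ) − γ + 1) = 0` of the
optimal semi-separable mechanism; (iii) the ratio of the two competitive ratios
is `(1 + r·w)/(1 + S/loJ)`. -/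
theorem stmt9 (n : ℕ) (hn : 1 ≤ n) (hi : Fin n → ℝ) (hhi : ∀ j, 0 < hi j)
    (loJ hiJ : ℝ) (hloJ : 0 < loJ) (hJJ : loJ ≤ hiJ)
    (S : ℝ) (hS : S = ∑ j, hi j) (hSpos : 0 < S)
    (r : ℝ) (hr : r = 1 / (1 + Real.log (hiJ / loJ)))
    (w : ℝ) (hw0 : 0 ≤ w) (hw : w * Real.exp w = S / (Real.exp 1 * hiJ))
    (γ : ℝ) (hγdef : γ = (1 / r + w)⁻¹) :
    -- (i) worst-case performance ratio of the separable mechanism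
    IsLeast {x : ℝ | ∃ (v : Fin n → ℝ) (vJ : ℝ),
        (∀ j, v j ∈ Set.Icc 0 (hi j)) ∧ vJ ∈ Set.Icc loJ hiJ ∧
        x = r * vJ / ((∑ j, v j) + vJ)}
      (r * loJ / (S + loJ)) ∧
    -- (ii) γ is the competitive ratio of the optimal semi-separable mechanism
    (γ ∈ Set.Ioc (0:ℝ) 1 ∧
      γ * Real.exp (-1/γ) * S - loJ * (γ * Real.log (loJ / hiJ) - γ + 1) = 0) ∧
    -- (iii) ratio of the two competitive ratios
    (r * loJ / (S + loJ)) / γ = (1 + r * w) / (1 + S / loJ) := by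
  have hhiJ : 0 < hiJ := lt_of_lt_of_le hloJ hJJ
  set L := Real.log (hiJ / loJ) with hLdef
  have hL : 0 ≤ L := Real.log_nonneg (by rw [le_div_iff₀ hloJ]; linarith)
  have h1L : (0:ℝ) < 1 + L := by linarith
  have hrpos : 0 < r := by rw [hr]; positivity
  have hrinv : 1 / r = 1 + L := by rw [hr]; field_simp
  have hγeq : γ = (1 + L + w)⁻¹ := by rw [hγdef, hrinv]
  have h1Lw : (0:ℝ) < 1 + L + w := by linarith
  have hγpos : 0 < γ := by rw [hγeq]; positivity
  have hγ1 : γ ≤ 1 := by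
    rw [hγeq]
    exact inv_le_one_of_one_le₀ (by linarith)
  have hγmul : γ * (1 + L + w) = 1 := by
    rw [hγeq]; exact inv_mul_cancel₀ h1Lw.ne'
  have hlogneg : Real.log (loJ / hiJ) = -L := by
    rw [hLdef, ← Real.log_inv, inv_div]
  have hexpL : Real.exp L = hiJ / loJ := Real.exp_log (by positivity)
  have h1γ : -1/γ = -1 + -L + -w := by
    rw [hγeq]; field_simp; ring
  have hS' : S = w * Real.exp w * (Real.exp 1 * hiJ) := by
    rw [hw]; field_simp
  refine ⟨⟨⟨hi, loJ, fun j => ⟨(hhi j).le, le_refl _⟩, ⟨le_refl _, hJJ⟩, by rw [hS]⟩, ?_⟩,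
    ⟨⟨hγpos, hγ1⟩, ?_⟩, ?_⟩
  · rintro x ⟨v, vJ, hv, hvJ, rfl⟩
    obtain ⟨hvJ1, hvJ2⟩ := hvJ
    have hsum_le : ∑ j, v j ≤ S := hS ▸ Finset.sum_le_sum (fun j _ => (hv j).2)
    have hsum0 : 0 ≤ ∑ j, v j := Finset.sum_nonneg (fun j _ => (hv j).1)
    rw [div_le_div_iff₀ (by linarith) (by linarith)]
    nlinarith [mul_le_mul_of_nonneg_left hsum_le (mul_nonneg hrpos.le hloJ.le),
      mul_le_mul_of_nonneg_right hvJ1 (mul_nonneg hrpos.le hSpos.le)]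
  · have key : Real.exp (-1/γ) * S = w * loJ := by
      rw [h1γ, hS', Real.exp_add, Real.exp_add, Real.exp_neg 1, Real.exp_neg L,
        Real.exp_neg w, hexpL]
      field_simp
    rw [hlogneg, mul_assoc, key]
    linear_combination loJ * hγmul
  · have hγne : γ ≠ 0 := hγpos.ne'
    have hrne : r ≠ 0 := hrpos.ne'
    rw [hγeq]
    have hrw : r * (1 + L + w) = 1 + r * w := by
      have : r * (1 + L) = 1 := by
        rw [hr]; field_simp
      linear_combination this
    field_simp
    linear_combination (loJ + S) * hrw
end

section
/- Let lo_j ≤ ω_j ≤ hi_j with lo_j > 0 for all j ∈ {1,…,J}, and define v(ξ) ∈ ℝ^J by v_j(ξ) = min(ω_j·ξ, hi_j) for ξ ≥ 1 (so v(ξ) ∈ V for all ξ ≥ 1). Then: (i) for every incentive compatible and individually rational mechanism (q, t) on V with t Borel measurable, ∫_1^∞ t(v(ξ))·ξ^{−2} dξ ≤ ∑_{j=1}^J ω_j; and (ii) the separate posted-price mechanism q*_j(v) = 1 if v_j ≥ ω_j and 0 otherwise, t*(v) = ∑_j ω_j·1{v_j ≥ ω_j}, is incentive compatible and individually rational on V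 and attains equality: ∫_1^∞ t*(v(ξ))·ξ^{−2} dξ = ∑_{j=1}^J ω_j. Hence, under the adversarial distribution of v with density proportional to (∑_j v_j(ξ))·ξ^{−2} in ξ, separately posting price ω_j for each product j maximizes the seller's expected performance ratio E[t(v)/∑_j v_j]. -/
open Real Finset MeasureTheory

/-- the adversarial curve -/
def mcurve (J : ℕ) (ω hi : Fin J → ℝ) (s : ℝ) : Fin J → ℝ := fun j => min (ω j * s) (hi j)

lemma stmt11_intOn_inv_sq {c : ℝ} (hc : 0 < c) :
    IntegrableOn (fun z : ℝ => (z ^ 2)⁻¹) (Set.Ioi c) := by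
  have h := integrableOn_Ioi_rpow_of_lt (a := (-2 : ℝ)) (by norm_num) hc
  refine h.congr_fun (fun x hx => ?_) measurableSet_Ioi
  have hx0 : (0:ℝ) < x := hc.trans hx
  beta_reduce
  rw [show (-2:ℝ) = ((-2 : ℤ) : ℝ) by norm_num, Real.rpow_intCast]
  rw [zpow_neg, zpow_two, sq]

lemma stmt11_int_inv_sq {c : ℝ} (hc : 0 < c) :
    (∫ z in Set.Ioi c, (z ^ 2)⁻¹) = c⁻¹ := by
  have h := integral_Ioi_rpow_of_lt (a := (-2:ℝ)) (by norm_num) hc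
  have e1 : (∫ z in Set.Ioi c, (z ^ 2)⁻¹) = ∫ z : ℝ in Set.Ioi c, z ^ (-2:ℝ) := by
    refine setIntegral_congr_fun measurableSet_Ioi (fun x hx => ?_)
    have hx0 : (0:ℝ) < x := hc.trans hx
    rw [show (-2:ℝ) = ((-2 : ℤ) : ℝ) by norm_num, Real.rpow_intCast]
    rw [zpow_neg, zpow_two, sq]
  rw [e1, h]
  rw [show (-2:ℝ) + 1 = -1 by norm_num, Real.rpow_neg_one]
  field_simp

lemma stmt11_integrableOn {f : ℝ → ℝ} (hm : Measurable f) {C : ℝ}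
    (hb : ∀ z : ℝ, 1 < z → |f z| ≤ C) :
    IntegrableOn (fun z => f z / z ^ 2) (Set.Ioi (1:ℝ)) := by
  have hmaj : IntegrableOn (fun z : ℝ => C * (z ^ 2)⁻¹) (Set.Ioi 1) :=
    (stmt11_intOn_inv_sq one_pos).const_mul C
  refine hmaj.mono' ((hm.div ((measurable_id.pow_const 2))).aestronglyMeasurable) ?_
  filter_upwards [ae_restrict_mem measurableSet_Ioi] with z hz
  have hz0 : (0:ℝ) < z := lt_trans one_pos hz
  have hz2 : (0:ℝ) < z ^ 2 := by positivity
  rw [Real.norm_eq_abs, abs_div, abs_of_pos hz2, div_eq_mul_inv]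
  exact mul_le_mul_of_nonneg_right (hb z hz) (by positivity)

/-- for the comonotonic adversarial curve
`v(ξ)_j = min(ω_j·ξ, hi_j)`, `ξ ∈ [1,∞)`:
(i) every incentive compatible and individually rational mechanism `(q, t)` on
the box `V` with `t` Borel measurable satisfies
`∫_1^∞ t(v(ξ))·ξ⁻² dξ ≤ ∑ j, ω j`; and
(ii) the separate posted-price mechanism with prices `ω_j`
(`q*_j(v) = 1{v_j ≥ ω_j}`, `t*(v) = ∑ j, ω_j·1{v_j ≥ ω_j}`) is incentive
compatible and individually rational on `V` and attains equality. -/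
theorem stmt11 (J : ℕ) (hJ : 1 ≤ J) (lo hi ω : Fin J → ℝ)
    (hlo : ∀ j, 0 < lo j) (hloω : ∀ j, lo j ≤ ω j) (hωhi : ∀ j, ω j ≤ hi j)
    (qstar : (Fin J → ℝ) → Fin J → ℝ)
    (hqstar : ∀ v j, qstar v j = if ω j ≤ v j then 1 else 0)
    (tstar : (Fin J → ℝ) → ℝ)
    (htstar : ∀ v, tstar v = ∑ j, if ω j ≤ v j then ω j else 0) :
    -- (i)
    (∀ (q : (Fin J → ℝ) → Fin J → ℝ) (t : (Fin J → ℝ) → ℝ),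
      Measurable t →
      (∀ v : Fin J → ℝ, (∀ j, v j ∈ Set.Icc (lo j) (hi j)) →
        ∀ j, 0 ≤ q v j ∧ q v j ≤ 1) →
      (∀ v : Fin J → ℝ, (∀ j, v j ∈ Set.Icc (lo j) (hi j)) → 0 ≤ t v) →
      (∀ v : Fin J → ℝ, (∀ j, v j ∈ Set.Icc (lo j) (hi j)) →
        ∀ v' : Fin J → ℝ, (∀ j, v' j ∈ Set.Icc (lo j) (hi j)) →
        (∑ j, q v' j * v j) - t v' ≤ (∑ j, q v j * v j) - t v) →
      (∀ v : Fin J → ℝ, (∀ j, v j ∈ Set.Icc (lo j) (hi j)) →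
        0 ≤ (∑ j, q v j * v j) - t v) →
      (∫ ξ in Set.Ioi (1:ℝ), t (fun j => min (ω j * ξ) (hi j)) / ξ ^ 2) ≤ ∑ j, ω j) ∧
    -- (ii) the posted-price mechanism is feasible and attains equality
    ((∀ v : Fin J → ℝ, (∀ j, v j ∈ Set.Icc (lo j) (hi j)) →
        ∀ j, 0 ≤ qstar v j ∧ qstar v j ≤ 1) ∧
     (∀ v : Fin J → ℝ, (∀ j, v j ∈ Set.Icc (lo j) (hi j)) → 0 ≤ tstar v) ∧
     (∀ v : Fin J → ℝ, (∀ j, v j ∈ Set.Icc (lo j) (hi j)) →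
        ∀ v' : Fin J → ℝ, (∀ j, v' j ∈ Set.Icc (lo j) (hi j)) →
        (∑ j, qstar v' j * v j) - tstar v' ≤ (∑ j, qstar v j * v j) - tstar v) ∧
     (∀ v : Fin J → ℝ, (∀ j, v j ∈ Set.Icc (lo j) (hi j)) →
        0 ≤ (∑ j, qstar v j * v j) - tstar v) ∧
     (∫ ξ in Set.Ioi (1:ℝ), tstar (fun j => min (ω j * ξ) (hi j)) / ξ ^ 2) = ∑ j, ω j) := by
  have hω0 : ∀ j, 0 < ω j := fun j => lt_of_lt_of_le (hlo j) (hloω j)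
  have hhi0 : ∀ j, 0 < hi j := fun j => lt_of_lt_of_le (hω0 j) (hωhi j)
  have hbox : ∀ s : ℝ, 1 ≤ s → ∀ j, mcurve J ω hi s j ∈ Set.Icc (lo j) (hi j) := by
    intro s hs j
    constructor
    · refine le_min ?_ ((hloω j).trans (hωhi j))
      calc lo j ≤ ω j := hloω j
      _ ≤ ω j * s := le_mul_of_one_le_right (hω0 j).le hs
    · exact min_le_right _ _
  have hcmono : ∀ s s' : ℝ, s ≤ s' → ∀ j, mcurve J ω hi s j ≤ mcurve J ω hi s' j :=
    fun s s' h j => min_le_min (mul_le_mul_of_nonneg_left h (hω0 j).le) le_rfl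
  have hcnn : ∀ s : ℝ, 1 ≤ s → ∀ j, 0 ≤ mcurve J ω hi s j :=
    fun s hs j => (hlo j).le.trans (hbox s hs j).1
  refine ⟨?_, ?_, ?_, ?_, ?_, ?_⟩
  · -- part (i)
    intro q t ht hq ht0 hIC hIR
    show (∫ ξ in Set.Ioi (1:ℝ), t (mcurve J ω hi ξ) / ξ ^ 2) ≤ ∑ j, ω j
    set U : ℝ → ℝ := fun s =>
      (∑ j, q (mcurve J ω hi (max s 1)) j * mcurve J ω hi (max s 1) j)
        - t (mcurve J ω hi (max s 1)) with hU
    have hUdef : ∀ s : ℝ, 1 ≤ s →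
        U s = (∑ j, q (mcurve J ω hi s) j * mcurve J ω hi s j) - t (mcurve J ω hi s) := by
      intro s hs
      simp only [hU, max_eq_left hs]
    have henv : ∀ s s' : ℝ, 1 ≤ s → s ≤ s' →
        (∑ j, q (mcurve J ω hi s) j * (mcurve J ω hi s' j - mcurve J ω hi s j))
          ≤ U s' - U s := by
      intro s s' h1 h2
      have h1' : (1:ℝ) ≤ s' := h1.trans h2
      have hIC' := hIC (mcurve J ω hi s') (hbox s' h1') (mcurve J ω hi s) (hbox s h1)
      rw [hUdef s h1, hUdef s' h1']
      have hexp : (∑ j, q (mcurve J ω hi s) j * (mcurve J ω hi s' j - mcurve J ω hi s j))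
          = (∑ j, q (mcurve J ω hi s) j * mcurve J ω hi s' j)
            - ∑ j, q (mcurve J ω hi s) j * mcurve J ω hi s j := by
        rw [← Finset.sum_sub_distrib]
        exact Finset.sum_congr rfl fun j _ => by ring
      linarith [hIC']
    have hUmono : Monotone U := by
      intro s s' hss'
      have h1 : (1:ℝ) ≤ max s 1 := le_max_right _ _
      have h2 : max s 1 ≤ max s' 1 := max_le_max hss' le_rfl
      have hd := henv _ _ h1 h2
      have hnn : 0 ≤ ∑ j, q (mcurve J ω hi (max s 1)) j
          * (mcurve J ω hi (max s' 1) j - mcurve J ω hi (max s 1) j) :=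
        Finset.sum_nonneg fun j _ =>
          mul_nonneg (hq _ (hbox _ h1) j).1 (sub_nonneg.2 (hcmono _ _ h2 j))
      have e1 : U (max s 1) = U s := by
        simp only [hU, max_eq_left h1]
      have e2 : U (max s' 1) = U s' := by
        simp only [hU, max_eq_left (le_max_right s' 1)]
      linarith
    have hU0 : ∀ s, 0 ≤ U s := by
      intro s
      simp only [hU]
      exact hIR _ (hbox _ (le_max_right _ _))
    have hQsum : ∀ s : ℝ, 1 ≤ s →
        (∑ j, q (mcurve J ω hi s) j * mcurve J ω hi s j) ≤ ∑ j, hi j := by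
      intro s hs
      apply Finset.sum_le_sum
      intro j _
      have hqj := hq _ (hbox s hs) j
      have h2 := (hbox s hs j).2
      have h3 := hcnn s hs j
      nlinarith
    have hUb : ∀ s, U s ≤ ∑ j, hi j := by
      intro s
      have h1 : (1:ℝ) ≤ max s 1 := le_max_right _ _
      have ht' := ht0 _ (hbox _ h1)
      have := hQsum _ h1
      simp only [hU]
      linarith
    have hUmeas : Measurable U := hUmono.measurable
    have hHB0 : (0:ℝ) ≤ ∑ j, hi j := Finset.sum_nonneg fun j _ => (hhi0 j).le
    have hUabs : ∀ z : ℝ, 1 < z → |U z| ≤ ∑ j, hi j := by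
      intro z _
      rw [abs_le]
      exact ⟨by linarith [hU0 z], hUb z⟩
    have hcont : Continuous (fun s : ℝ => mcurve J ω hi s) := by
      apply continuous_pi
      intro j
      exact (continuous_const.mul continuous_id).min continuous_const
    have hTmeas : Measurable (fun s : ℝ => t (mcurve J ω hi s)) := ht.comp hcont.measurable
    have hTabs : ∀ z : ℝ, 1 < z → |t (mcurve J ω hi z)| ≤ ∑ j, hi j := by
      intro z hz
      have hb := hbox z hz.le
      have h0 := ht0 _ hb
      have hir := hIR _ hb
      have := hQsum z hz.le
      rw [abs_of_nonneg h0]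
      linarith
    set I := ∫ ξ in Set.Ioi (1:ℝ), t (mcurve J ω hi ξ) / ξ ^ 2 with hI
    have hW : 0 < ∑ j, ω j := Finset.sum_pos (fun j _ => hω0 j) ⟨⟨0, hJ⟩, Finset.mem_univ _⟩
    suffices hsuff : ∀ r : ℝ, 1 < r → I ≤ r * ∑ j, ω j by
      by_contra hcon
      push_neg at hcon
      set r : ℝ := (I + ∑ j, ω j) / (2 * ∑ j, ω j) with hr
      have hr1 : 1 < r := by
        rw [hr, lt_div_iff₀ (by linarith)]
        linarith
      have h2 := hsuff r hr1
      have h3 : r * ∑ j, ω j = (I + ∑ j, ω j) / 2 := by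
        rw [hr]
        field_simp
      rw [h3] at h2
      linarith
    intro r hr
    have hr0 : (0:ℝ) < r := lt_trans one_pos hr
    have hrm1 : (0:ℝ) < r - 1 := by linarith
    set Hf : ℝ → ℝ := fun z => ∑ j, if hi j < ω j * (r * z) then hi j else 0 with hHf
    have hHmeas : Measurable Hf := by
      rw [hHf]
      apply Finset.measurable_sum
      intro j _
      exact Measurable.ite
        (measurableSet_lt measurable_const ((measurable_id.const_mul r).const_mul (ω j)))
        measurable_const measurable_const
    have hHabs : ∀ z : ℝ, 1 < z → |Hf z| ≤ ∑ j, hi j := by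
      intro z _
      have h0 : 0 ≤ Hf z := by
        rw [hHf]
        exact Finset.sum_nonneg fun j _ => by
          by_cases h : hi j < ω j * (r * z)
          · rw [if_pos h]; exact (hhi0 j).le
          · rw [if_neg h]
      have h1 : Hf z ≤ ∑ j, hi j := by
        rw [hHf]
        apply Finset.sum_le_sum
        intro j _
        by_cases h : hi j < ω j * (r * z)
        · rw [if_pos h]
        · rw [if_neg h]; exact (hhi0 j).le
      rw [abs_of_nonneg h0]
      exact h1
    have iT : IntegrableOn (fun z => t (mcurve J ω hi z) / z ^ 2) (Set.Ioi (1:ℝ)) :=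
      stmt11_integrableOn hTmeas hTabs
    have i2 : IntegrableOn (fun z => U z / z ^ 2) (Set.Ioi (1:ℝ)) :=
      stmt11_integrableOn hUmeas hUabs
    have i1 : IntegrableOn (fun z => U (r * z) / z ^ 2) (Set.Ioi (1:ℝ)) :=
      stmt11_integrableOn (hUmeas.comp (measurable_id.const_mul r))
        (fun z hz => hUabs (r * z) (by nlinarith))
    have i3 : IntegrableOn (fun z => Hf z / z ^ 2) (Set.Ioi (1:ℝ)) :=
      stmt11_integrableOn hHmeas hHabs
    have i3j : ∀ j, IntegrableOn
        (fun z => (if hi j < ω j * (r * z) then hi j else 0) / z ^ 2) (Set.Ioi (1:ℝ)) := by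
      intro j
      refine stmt11_integrableOn (Measurable.ite
        (measurableSet_lt measurable_const ((measurable_id.const_mul r).const_mul (ω j)))
        measurable_const measurable_const) (C := hi j) ?_
      intro z _
      by_cases h : hi j < ω j * (r * z)
      · rw [if_pos h, abs_of_pos (hhi0 j)]
      · rw [if_neg h, abs_zero]; exact (hhi0 j).le
    have hkey : ∀ z ∈ Set.Ioi (1:ℝ), t (mcurve J ω hi z) / z ^ 2
        ≤ ((U (r * z) - U z) / (r - 1) + Hf z - U z) / z ^ 2 := by
      intro z hz
      have hz1 : (1:ℝ) < z := hz
      have hz0 : (0:ℝ) < z := lt_trans one_pos hz1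
      have h1z : (1:ℝ) ≤ z := hz1.le
      have hzr : z ≤ r * z := by nlinarith
      have hD := henv z (r * z) h1z hzr
      have hA : (∑ j, q (mcurve J ω hi z) j * mcurve J ω hi z j)
          ≤ (∑ j, q (mcurve J ω hi z) j * (mcurve J ω hi (r * z) j - mcurve J ω hi z j))
              / (r - 1) + Hf z := by
        rw [hHf, Finset.sum_div, ← Finset.sum_add_distrib]
        apply Finset.sum_le_sum
        intro j _
        have hqj := hq _ (hbox z h1z) j
        by_cases hcase : hi j < ω j * (r * z)
        · rw [if_pos hcase]
          have hc2 := (hbox z h1z j).2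
          have hc0 := hcnn z h1z j
          have hmon : mcurve J ω hi z j ≤ mcurve J ω hi (r * z) j := hcmono _ _ hzr j
          have hterm : 0 ≤ q (mcurve J ω hi z) j
              * (mcurve J ω hi (r * z) j - mcurve J ω hi z j) / (r - 1) :=
            div_nonneg (mul_nonneg hqj.1 (by linarith)) hrm1.le
          nlinarith
        · rw [if_neg hcase, add_zero]
          push_neg at hcase
          have e2 : mcurve J ω hi (r * z) j = ω j * (r * z) := min_eq_left hcase
          have e1 : mcurve J ω hi z j = ω j * z := by
            apply min_eq_left
            nlinarith [hω0 j]
          rw [e1, e2, show ω j * (r * z) - ω j * z = (ω j * z) * (r - 1) by ring,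
            show q (mcurve J ω hi z) j * ((ω j * z) * (r - 1))
              = (q (mcurve J ω hi z) j * (ω j * z)) * (r - 1) by ring,
            mul_div_cancel_right₀ _ (ne_of_gt hrm1)]
      have hUz := hUdef z h1z
      have hDle : (∑ j, q (mcurve J ω hi z) j
            * (mcurve J ω hi (r * z) j - mcurve J ω hi z j)) / (r - 1)
          ≤ (U (r * z) - U z) / (r - 1) := by
        have h := div_nonneg (sub_nonneg.2 hD) hrm1.le
        rw [sub_div] at h
        linarith
      have hnum : t (mcurve J ω hi z) ≤ (U (r * z) - U z) / (r - 1) + Hf z - U z := by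
        have htv : t (mcurve J ω hi z)
            = (∑ j, q (mcurve J ω hi z) j * mcurve J ω hi z j) - U z := by
          linarith [hUz]
        rw [htv]
        linarith
      have hz2 : (0:ℝ) < z ^ 2 := by positivity
      exact div_le_div_of_nonneg_right hnum hz2.le
    have hgeq : Set.EqOn (fun z => ((U (r * z) - U z) / (r - 1) + Hf z - U z) / z ^ 2)
        (fun z => (r - 1)⁻¹ * (U (r * z) / z ^ 2 - U z / z ^ 2) + Hf z / z ^ 2 - U z / z ^ 2)
        (Set.Ioi (1:ℝ)) := by
      intro z hz
      have hz0 : (0:ℝ) < z := lt_trans one_pos hz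
      have hz2 : z ^ 2 ≠ 0 := by positivity
      have hrm : r - 1 ≠ 0 := ne_of_gt hrm1
      simp only
      field_simp
    have ia : IntegrableOn (fun z => U (r * z) / z ^ 2 - U z / z ^ 2) (Set.Ioi (1:ℝ)) :=
      i1.sub i2
    have ib : IntegrableOn (fun z => (r - 1)⁻¹ * (U (r * z) / z ^ 2 - U z / z ^ 2))
        (Set.Ioi (1:ℝ)) := ia.const_mul _
    have ic : IntegrableOn
        (fun z => (r - 1)⁻¹ * (U (r * z) / z ^ 2 - U z / z ^ 2) + Hf z / z ^ 2)
        (Set.Ioi (1:ℝ)) := ib.add i3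
    have hgint_raw : IntegrableOn
        (fun z => (r - 1)⁻¹ * (U (r * z) / z ^ 2 - U z / z ^ 2) + Hf z / z ^ 2 - U z / z ^ 2)
        (Set.Ioi (1:ℝ)) := ic.sub i2
    have hgint : IntegrableOn
        (fun z => ((U (r * z) - U z) / (r - 1) + Hf z - U z) / z ^ 2) (Set.Ioi (1:ℝ)) :=
      hgint_raw.congr_fun (fun x hx => (hgeq hx).symm) measurableSet_Ioi
    have step1 : I ≤ ∫ z in Set.Ioi (1:ℝ),
        ((U (r * z) - U z) / (r - 1) + Hf z - U z) / z ^ 2 := by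
      rw [hI]
      exact setIntegral_mono_on iT hgint measurableSet_Ioi hkey
    have step2 : (∫ z in Set.Ioi (1:ℝ), ((U (r * z) - U z) / (r - 1) + Hf z - U z) / z ^ 2)
        = (r - 1)⁻¹ * ((∫ z in Set.Ioi (1:ℝ), U (r * z) / z ^ 2)
            - ∫ z in Set.Ioi (1:ℝ), U z / z ^ 2)
          + (∫ z in Set.Ioi (1:ℝ), Hf z / z ^ 2) - ∫ z in Set.Ioi (1:ℝ), U z / z ^ 2 := by
      rw [setIntegral_congr_fun measurableSet_Ioi hgeq]
      rw [integral_sub ic i2]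
      rw [integral_add ib i3]
      rw [integral_const_mul]
      rw [integral_sub i1 i2]
    have step3 : (∫ z in Set.Ioi (1:ℝ), U (r * z) / z ^ 2)
        ≤ r * ∫ z in Set.Ioi (1:ℝ), U z / z ^ 2 := by
      have he : Set.EqOn (fun z => U (r * z) / z ^ 2)
          (fun z => (fun y => r ^ 2 * (U y / y ^ 2)) (r * z)) (Set.Ioi (1:ℝ)) := by
        intro z hz
        have hz0 : (0:ℝ) < z := lt_trans one_pos hz
        have hz2 : z ^ 2 ≠ 0 := by positivity
        have hr2 : r ≠ 0 := ne_of_gt hr0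
        simp only
        rw [mul_pow]
        field_simp
      rw [setIntegral_congr_fun measurableSet_Ioi he]
      rw [integral_comp_mul_left_Ioi (fun y => r ^ 2 * (U y / y ^ 2)) 1 hr0]
      rw [mul_one, smul_eq_mul, integral_const_mul]
      have hmono_set : (∫ y in Set.Ioi r, U y / y ^ 2)
          ≤ ∫ y in Set.Ioi (1:ℝ), U y / y ^ 2 := by
        apply setIntegral_mono_set i2 ?_ ?_
        · filter_upwards [ae_restrict_mem measurableSet_Ioi] with y hy
          have hy0 : (0:ℝ) < y := lt_trans one_pos hy
          exact div_nonneg (hU0 y) (by positivity)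
        · exact HasSubset.Subset.eventuallyLE (Set.Ioi_subset_Ioi hr.le)
      have hI2nn : (0:ℝ) ≤ ∫ y in Set.Ioi r, U y / y ^ 2 :=
        setIntegral_nonneg measurableSet_Ioi
          (fun y hy => div_nonneg (hU0 y) (by positivity))
      calc r⁻¹ * (r ^ 2 * ∫ y in Set.Ioi r, U y / y ^ 2)
          = r * ∫ y in Set.Ioi r, U y / y ^ 2 := by
            field_simp
        _ ≤ r * ∫ y in Set.Ioi (1:ℝ), U y / y ^ 2 :=
            mul_le_mul_of_nonneg_left hmono_set hr0.le
    have step4 : (∫ z in Set.Ioi (1:ℝ), Hf z / z ^ 2) ≤ r * ∑ j, ω j := by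
      have hsplit : Set.EqOn (fun z => Hf z / z ^ 2)
          (fun z => ∑ j, (if hi j < ω j * (r * z) then hi j else 0) / z ^ 2)
          (Set.Ioi (1:ℝ)) := by
        intro z _
        simp only [hHf]
        rw [Finset.sum_div]
      rw [setIntegral_congr_fun measurableSet_Ioi hsplit]
      rw [integral_finset_sum Finset.univ (fun j _ => i3j j)]
      rw [show r * ∑ j, ω j = ∑ j, r * ω j from by rw [Finset.mul_sum]]
      apply Finset.sum_le_sum
      intro j _
      have hωr : (0:ℝ) < ω j * r := mul_pos (hω0 j) hr0
      set cc : ℝ := hi j / (ω j * r) with hcc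
      have hcc0 : 0 < cc := div_pos (hhi0 j) hωr
      have hEq : Set.EqOn (fun z => (if hi j < ω j * (r * z) then hi j else 0) / z ^ 2)
          (fun z => Set.indicator (Set.Ioi cc) (fun y => hi j * (y ^ 2)⁻¹) z)
          (Set.Ioi (1:ℝ)) := by
        intro z _
        have hiff : (hi j < ω j * (r * z)) ↔ cc < z := by
          rw [hcc, div_lt_iff₀ hωr]
          constructor <;> intro h <;> nlinarith
        simp only
        by_cases h : cc < z
        · rw [Set.indicator_of_mem (Set.mem_Ioi.2 h), if_pos (hiff.2 h), div_eq_mul_inv]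
        · rw [Set.indicator_of_notMem (fun hh => h (Set.mem_Ioi.1 hh)),
            if_neg (fun hh => h (hiff.1 hh)), zero_div]
      rw [setIntegral_congr_fun measurableSet_Ioi hEq]
      rw [setIntegral_indicator measurableSet_Ioi]
      rw [Set.Ioi_inter_Ioi]
      rw [integral_const_mul]
      have hsup0 : (0:ℝ) < 1 ⊔ cc := lt_of_lt_of_le one_pos le_sup_left
      rw [stmt11_int_inv_sq hsup0]
      have h1 : (1 ⊔ cc)⁻¹ ≤ cc⁻¹ := inv_anti₀ hcc0 le_sup_right
      calc hi j * (1 ⊔ cc)⁻¹ ≤ hi j * cc⁻¹ :=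
            mul_le_mul_of_nonneg_left h1 (hhi0 j).le
        _ = r * ω j := by
            rw [hcc, inv_div]
            field_simp [(hhi0 j).ne']
    have hQnn : (0:ℝ) ≤ ∫ z in Set.Ioi (1:ℝ), U z / z ^ 2 :=
      setIntegral_nonneg measurableSet_Ioi
        (fun z hz => div_nonneg (hU0 z) (by positivity))
    have hstep : (r - 1)⁻¹ * ((∫ z in Set.Ioi (1:ℝ), U (r * z) / z ^ 2)
          - ∫ z in Set.Ioi (1:ℝ), U z / z ^ 2)
        ≤ ∫ z in Set.Ioi (1:ℝ), U z / z ^ 2 := by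
      have h2 : (∫ z in Set.Ioi (1:ℝ), U (r * z) / z ^ 2)
          - (∫ z in Set.Ioi (1:ℝ), U z / z ^ 2)
          ≤ (r - 1) * ∫ z in Set.Ioi (1:ℝ), U z / z ^ 2 := by nlinarith [step3]
      calc (r - 1)⁻¹ * ((∫ z in Set.Ioi (1:ℝ), U (r * z) / z ^ 2)
            - ∫ z in Set.Ioi (1:ℝ), U z / z ^ 2)
          ≤ (r - 1)⁻¹ * ((r - 1) * ∫ z in Set.Ioi (1:ℝ), U z / z ^ 2) :=
            mul_le_mul_of_nonneg_left h2 (inv_nonneg.2 hrm1.le)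
        _ = ∫ z in Set.Ioi (1:ℝ), U z / z ^ 2 := by
            rw [← mul_assoc, inv_mul_cancel₀ (ne_of_gt hrm1), one_mul]
    rw [step2] at step1
    linarith
  · -- (ii) feasibility of qstar
    intro v hv j
    rw [hqstar]
    refine ⟨?_, ?_⟩ <;> split <;> norm_num
  · -- (ii) tstar nonneg
    intro v hv
    rw [htstar]
    apply Finset.sum_nonneg
    intro j _
    by_cases h : ω j ≤ v j
    · rw [if_pos h]; exact (hω0 j).le
    · rw [if_neg h]
  · -- (ii) IC
    intro v hv v' hv'
    simp only [hqstar, htstar]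
    rw [← Finset.sum_sub_distrib, ← Finset.sum_sub_distrib]
    apply Finset.sum_le_sum
    intro j _
    by_cases h1 : ω j ≤ v' j <;> by_cases h2 : ω j ≤ v j
    · rw [if_pos h1, if_pos h1, if_pos h2, if_pos h2]
    · rw [if_pos h1, if_pos h1, if_neg h2, if_neg h2]
      have := not_le.1 h2
      nlinarith
    · rw [if_neg h1, if_neg h1, if_pos h2, if_pos h2]
      nlinarith
    · rw [if_neg h1, if_neg h1, if_neg h2, if_neg h2]
  · -- (ii) IR
    intro v hv
    simp only [hqstar, htstar]
    rw [← Finset.sum_sub_distrib]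
    apply Finset.sum_nonneg
    intro j _
    by_cases h : ω j ≤ v j
    · rw [if_pos h, if_pos h]
      nlinarith
    · rw [if_neg h, if_neg h]
      norm_num
  · -- (ii) equality
    have heq : Set.EqOn (fun ξ : ℝ => tstar (fun j => min (ω j * ξ) (hi j)) / ξ ^ 2)
        (fun ξ : ℝ => (∑ j, ω j) * (ξ ^ 2)⁻¹) (Set.Ioi (1:ℝ)) := by
      intro ξ hξ
      have hξ1 : (1:ℝ) ≤ ξ := le_of_lt hξ
      simp only
      rw [htstar, div_eq_mul_inv]
      congr 1
      apply Finset.sum_congr rfl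
      intro j _
      rw [if_pos]
      exact le_min (le_mul_of_one_le_right (hω0 j).le hξ1) (hωhi j)
    rw [setIntegral_congr_fun measurableSet_Ioi heq]
    rw [integral_const_mul, stmt11_int_inv_sq one_pos]
    norm_num
end

section
/- For η ∈ (0,1], define ω_j(η) = e^{−1/η}·hi_j if lo_j < e^{−1/η}·hi_j and ω_j(η) = lo_j otherwise, and define f(η) = (∑_{j=1}^J ω_j(η))/(∑_{j=1}^J ω_j(η)·(ln(hi_j/ω_j(η)) + 1)). Let γ* ∈ (0,1] be the unique solution of φ(γ*) = 0. Then f(η) ≥ γ* for every η ∈ (0,1], and f(γ*) = γ*; that is, the minimum over η ∈ (0,1] of f(η) equals γ* and is attained at η = γ*. -/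
open Real Finset


lemma key_ineq (γ lo hi t : ℝ) (hγ : 0 < γ) (hlo : 0 < lo) (hlohi : lo ≤ hi)
    (ht : lo ≤ t) :
    (if lo < Real.exp (-1/γ) * hi then Real.exp (-1/γ) * hi else lo) -
      γ * ((if lo < Real.exp (-1/γ) * hi then Real.exp (-1/γ) * hi else lo) *
        (Real.log (hi / (if lo < Real.exp (-1/γ) * hi then Real.exp (-1/γ) * hi else lo)) + 1))
    ≤ t - γ * (t * (Real.log (hi / t) + 1)) := by
  have hhi : 0 < hi := lt_of_lt_of_le hlo hlohi
  have ht0 : 0 < t := lt_of_lt_of_le hlo ht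
  set s : ℝ := if lo < Real.exp (-1/γ) * hi then Real.exp (-1/γ) * hi else lo with hs
  have hs0 : 0 < s := by
    rw [hs]; split
    · positivity
    · exact hlo
  rw [Real.log_div hhi.ne' hs0.ne', Real.log_div hhi.ne' ht0.ne']
  -- convexity: (log s + 1) * (t - s) ≤ t * log t - s * log s
  have h1 : Real.log (s/t) ≤ s/t - 1 := Real.log_le_sub_one_of_pos (by positivity)
  have h2 : t * (Real.log s - Real.log t) ≤ s - t := by
    have h3 := mul_le_mul_of_nonneg_left h1 ht0.le
    calc t * (Real.log s - Real.log t) = t * Real.log (s/t) := by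
          rw [Real.log_div hs0.ne' ht0.ne']
      _ ≤ t * (s/t - 1) := h3
      _ = s - t := by field_simp
  have hconv : (Real.log s + 1) * (t - s) ≤ t * Real.log t - s * Real.log s := by
    nlinarith [h2]
  have h3 := mul_le_mul_of_nonneg_left hconv hγ.le
  by_cases hcase : lo < Real.exp (-1/γ) * hi
  · have hseq : s = Real.exp (-1/γ) * hi := by rw [hs, if_pos hcase]
    have hlogs : Real.log s = -1/γ + Real.log hi := by
      rw [hseq, Real.log_mul (Real.exp_ne_zero _) hhi.ne', Real.log_exp]
    have hgc : γ * Real.log s = γ * Real.log hi - 1 := by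
      rw [hlogs]; field_simp; ring
    have e1 : γ * (s * Real.log s) = γ * Real.log hi * s - s := by
      linear_combination s * hgc
    have e2 : γ * (t * Real.log s) = γ * Real.log hi * t - t := by
      linear_combination t * hgc
    nlinarith [h3, e1, e2]
  · have hseq : s = lo := by rw [hs, if_neg hcase]
    have hle : Real.exp (-1/γ) * hi ≤ lo := not_lt.mp hcase
    have h5 : -1/γ + Real.log hi ≤ Real.log lo := by
      have := Real.log_le_log (by positivity) hle
      rwa [Real.log_mul (Real.exp_ne_zero _) hhi.ne', Real.log_exp] at this
    have hd : γ * Real.log hi - 1 ≤ γ * Real.log lo := by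
      have h6 := mul_le_mul_of_nonneg_left h5 hγ.le
      have h7 : γ * (-1/γ) = -1 := by field_simp
      nlinarith [h6, h7]
    have h6 : (0:ℝ) ≤ 1 + γ * Real.log lo - γ * Real.log hi := by linarith
    rw [hseq] at h3 ⊢
    nlinarith [h3, mul_nonneg (sub_nonneg.mpr ht) h6]

/-- with `ω_j(η) = e^{−1/η}·hi_j` if `lo_j < e^{−1/η}·hi_j` and
`ω_j(η) = lo_j` otherwise, and
`f(η) = (∑ j, ω_j(η)) / (∑ j, ω_j(η)·(ln(hi_j/ω_j(η)) + 1))` the seller's best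
competitive ratio against the adversarial distribution indexed by `η`, the
minimum of `f` over `(0,1]` equals the unique zero `γ*` of `φ` and is attained
at `η = γ*`. -/
theorem stmt12 (J : ℕ) (hJ : 1 ≤ J) (lo hi : Fin J → ℝ)
    (hlo : ∀ j, 0 < lo j) (hlohi : ∀ j, lo j ≤ hi j)
    (γstar : ℝ) (hγ : γstar ∈ Set.Ioc (0:ℝ) 1) (hzero : phi J lo hi γstar = 0)
    (ω : ℝ → Fin J → ℝ)
    (hω : ∀ η j, ω η j =
      if lo j < Real.exp (-1/η) * hi j then Real.exp (-1/η) * hi j else lo j)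
    (f : ℝ → ℝ)
    (hf : ∀ η, f η = (∑ j, ω η j) / (∑ j, ω η j * (Real.log (hi j / ω η j) + 1))) :
    (∀ η ∈ Set.Ioc (0:ℝ) 1, γstar ≤ f η) ∧
    f γstar = γstar ∧
    IsLeast {y : ℝ | ∃ η ∈ Set.Ioc (0:ℝ) 1, y = f η} γstar := by
  obtain ⟨hγ0, hγ1⟩ := hγ
  have hhi : ∀ j, 0 < hi j := fun j => lt_of_lt_of_le (hlo j) (hlohi j)
  haveI : Nonempty (Fin J) := Fin.pos_iff_nonempty.mp hJ
  have hω_pos : ∀ η j, 0 < ω η j := by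
    intro η j; rw [hω]; split
    · exact mul_pos (Real.exp_pos _) (hhi j)
    · exact hlo j
  have hωlo : ∀ η j, lo j ≤ ω η j := by
    intro η j; rw [hω]; split
    · exact le_of_lt (by assumption)
    · exact le_refl _
  have hωhi : ∀ η, 0 < η → ∀ j, ω η j ≤ hi j := by
    intro η hη j; rw [hω]; split
    · have : Real.exp (-1/η) ≤ 1 := by
        rw [Real.exp_le_one_iff]
        exact div_nonpos_of_nonpos_of_nonneg (by norm_num) hη.le
      nlinarith [hhi j]
    · exact hlohi j
  -- positivity of denominator
  have hD : ∀ η, 0 < η → 0 < ∑ j, ω η j * (Real.log (hi j / ω η j) + 1) := by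
    intro η hη
    apply Finset.sum_pos _ Finset.univ_nonempty
    intro j _
    have h1 : 0 ≤ Real.log (hi j / ω η j) :=
      Real.log_nonneg ((one_le_div (hω_pos η j)).mpr (hωhi η hη j))
    nlinarith [hω_pos η j]
  -- phi identity : γ* D - N = phi
  have hkey0 : γstar * (∑ j, ω γstar j * (Real.log (hi j / ω γstar j) + 1))
      - (∑ j, ω γstar j) = phi J lo hi γstar := by
    rw [phi, Finset.mul_sum, Finset.mul_sum, ← Finset.sum_sub_distrib,
      ← Finset.sum_sub_distrib]
    apply Finset.sum_congr rfl
    intro j _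
    rw [hω]
    by_cases hcase : lo j < Real.exp (-1/γstar) * hi j
    · rw [if_pos hcase, if_pos hcase, if_pos hcase]
      have hlog : Real.log (hi j / (Real.exp (-1/γstar) * hi j)) = 1/γstar := by
        rw [Real.log_div (hhi j).ne' (mul_pos (Real.exp_pos _) (hhi j)).ne',
          Real.log_mul (Real.exp_ne_zero _) (hhi j).ne', Real.log_exp]
        ring
      rw [hlog]
      field_simp
      ring
    · rw [if_neg hcase, if_neg hcase, if_neg hcase]
      rw [Real.log_div (hhi j).ne' (hlo j).ne', Real.log_div (hlo j).ne' (hhi j).ne']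
      ring
  have hNγ : (∑ j, ω γstar j)
      = γstar * ∑ j, ω γstar j * (Real.log (hi j / ω γstar j) + 1) := by
    rw [hzero] at hkey0; linarith
  -- main inequality
  have hmain : ∀ η ∈ Set.Ioc (0:ℝ) 1,
      γstar * (∑ j, ω η j * (Real.log (hi j / ω η j) + 1)) ≤ ∑ j, ω η j := by
    intro η hη
    have hsum : ∑ j, (ω γstar j - γstar * (ω γstar j * (Real.log (hi j / ω γstar j) + 1)))
        ≤ ∑ j, (ω η j - γstar * (ω η j * (Real.log (hi j / ω η j) + 1))) := by
      apply Finset.sum_le_sum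
      intro j _
      rw [hω γstar j]
      exact key_ineq γstar (lo j) (hi j) (ω η j) hγ0 (hlo j) (hlohi j) (hωlo η j)
    rw [Finset.sum_sub_distrib, Finset.sum_sub_distrib, ← Finset.mul_sum,
      ← Finset.mul_sum] at hsum
    linarith
  have hfγ : f γstar = γstar := by
    rw [hf, hNγ, mul_div_assoc, div_self (hD γstar hγ0).ne', mul_one]
  have hlb : ∀ η ∈ Set.Ioc (0:ℝ) 1, γstar ≤ f η := by
    intro η hη
    rw [hf, le_div_iff₀ (hD η hη.1)]
    exact hmain η hη
  refine ⟨hlb, hfγ, ⟨⟨γstar, ⟨hγ0, hγ1⟩, hfγ.symm⟩, ?_⟩⟩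
  rintro y ⟨η, hη, rfl⟩
  exact hlb η hη
end

section
/- Let (q, t) be an incentive compatible and individually rational mechanism on V with t Borel measurable. Then the infimum, over Borel probability measures F supported on V, of the ratio (∫_V t dF)/(sup{∫_V t' dF : (q', t') an incentive compatible and individually rational mechanism on V with t' Borel measurable}) equals the infimum over v ∈ V of t(v)/(∑_{j=1}^J v_j). Moreover, for every such F the denominator lies between ∑_j lo_j > 0 and ∑_j hi_j, so the ratio is well defined. -/
open Real Finset MeasureTheory

/-- for a fixed incentive compatible and individually rational
mechanism `(q,t)` on the box `V` with `t` Borel measurable, the infimum over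
Borel probability measures `F` supported on `V` of the performance ratio
`(∫ t dF) / sup{∫ t' dF : (q',t') IC & IR with t' measurable}` equals the
infimum over `v ∈ V` of `t(v)/∑ j v j`; moreover the hindsight-optimal
denominator always lies between `∑ j lo j > 0` and `∑ j hi j`. -/
theorem stmt14 (J : ℕ) (hJ : 1 ≤ J) (lo hi : Fin J → ℝ)
    (hlo : ∀ j, 0 < lo j) (hlohi : ∀ j, lo j ≤ hi j)
    (V : Set (Fin J → ℝ))
    (hV : V = {v | ∀ j, v j ∈ Set.Icc (lo j) (hi j)})
    (IsMech : ((Fin J → ℝ) → Fin J → ℝ) → ((Fin J → ℝ) → ℝ) → Prop)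
    (hIsMech : ∀ q t, IsMech q t ↔
      (Measurable t ∧
       (∀ v ∈ V, ∀ j, 0 ≤ q v j ∧ q v j ≤ 1) ∧
       (∀ v ∈ V, 0 ≤ t v) ∧
       (∀ v ∈ V, ∀ v' ∈ V, (∑ j, q v' j * v j) - t v' ≤ (∑ j, q v j * v j) - t v) ∧
       (∀ v ∈ V, 0 ≤ (∑ j, q v j * v j) - t v)))
    (Hind : Measure (Fin J → ℝ) → ℝ)
    (hHind : ∀ F, Hind F =
      sSup {x : ℝ | ∃ q' t', IsMech q' t' ∧ x = ∫ v, t' v ∂F})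
    (q : (Fin J → ℝ) → Fin J → ℝ) (t : (Fin J → ℝ) → ℝ) (hqt : IsMech q t) :
    (0 < ∑ j, lo j) ∧
    (∀ F : Measure (Fin J → ℝ), IsProbabilityMeasure F → F Vᶜ = 0 →
      (∑ j, lo j) ≤ Hind F ∧ Hind F ≤ ∑ j, hi j) ∧
    sInf {r : ℝ | ∃ F : Measure (Fin J → ℝ),
        IsProbabilityMeasure F ∧ F Vᶜ = 0 ∧ r = (∫ v, t v ∂F) / Hind F}
      = sInf {r : ℝ | ∃ v ∈ V, r = t v / ∑ j, v j} := by
  have hne : Nonempty (Fin J) := ⟨⟨0, hJ⟩⟩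
  have hVmem : ∀ v : Fin J → ℝ, v ∈ V ↔ ∀ j, lo j ≤ v j ∧ v j ≤ hi j := by
    intro v; simp [hV, Set.mem_Icc]
  have hVmeas : MeasurableSet V := by
    rw [hV]
    have h1 : {v : Fin J → ℝ | ∀ j, v j ∈ Set.Icc (lo j) (hi j)}
        = ⋂ j, (fun v : Fin J → ℝ => v j) ⁻¹' Set.Icc (lo j) (hi j) := by
      ext v; simp
    rw [h1]
    exact MeasurableSet.iInter fun j => measurableSet_Icc.preimage (measurable_pi_apply j)
  have hloV : lo ∈ V := (hVmem lo).mpr fun j => ⟨le_refl _, hlohi j⟩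
  have hSpos : 0 < ∑ j, lo j :=
    Finset.sum_pos (fun j _ => hlo j) Finset.univ_nonempty
  have hsum_lo : ∀ v ∈ V, (∑ j, lo j) ≤ ∑ j, v j := fun v hv =>
    Finset.sum_le_sum fun j _ => ((hVmem v).mp hv j).1
  have hsum_hi : ∀ v ∈ V, (∑ j, v j) ≤ ∑ j, hi j := fun v hv =>
    Finset.sum_le_sum fun j _ => ((hVmem v).mp hv j).2
  have hhi_nonneg : (0:ℝ) ≤ ∑ j, hi j := le_trans hSpos.le (hsum_hi lo hloV)
  have hsum_meas : Measurable (fun w : Fin J → ℝ => ∑ j, w j) :=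
    Finset.measurable_sum _ fun j _ => measurable_pi_apply j
  -- any mechanism payment lies between 0 and the sum of valuations on V
  have hmechbd : ∀ q' t', IsMech q' t' → ∀ v ∈ V, 0 ≤ t' v ∧ t' v ≤ ∑ j, v j := by
    intro q' t' hm v hv
    obtain ⟨hmt, hq01, ht0, _, hir⟩ := (hIsMech q' t').mp hm
    refine ⟨ht0 v hv, ?_⟩
    have h1 := hir v hv
    have h2 : (∑ j, q' v j * v j) ≤ ∑ j, v j := by
      refine Finset.sum_le_sum fun j _ => ?_
      have hvj : 0 ≤ v j := le_of_lt (lt_of_lt_of_le (hlo j) ((hVmem v).mp hv j).1)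
      nlinarith [(hq01 v hv j).1, (hq01 v hv j).2]
    linarith
  -- the constant mechanism
  have hconst : IsMech (fun _ _ => 1) (fun _ => ∑ j, lo j) := by
    rw [hIsMech]
    refine ⟨measurable_const, fun v _ j => ⟨zero_le_one, le_refl _⟩,
      fun v _ => hSpos.le, fun v _ v' _ => le_refl _, fun v hv => ?_⟩
    simp only [one_mul, sub_nonneg]
    exact hsum_lo v hv
  -- the posted-price mechanism at price ∑ v₀ j
  have hpp : ∀ v₀ ∈ V, IsMech
      (fun w _ => if (∑ j, v₀ j) ≤ ∑ j, w j then (1:ℝ) else 0)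
      (fun w => if (∑ j, v₀ j) ≤ ∑ j, w j then (∑ j, v₀ j) else 0) := by
    intro v₀ hv₀
    have hp0 : 0 ≤ ∑ j, v₀ j := le_trans hSpos.le (hsum_lo v₀ hv₀)
    rw [hIsMech]
    have hkey : ∀ x w : Fin J → ℝ,
        (∑ j, (if (∑ j, v₀ j) ≤ ∑ j, x j then (1:ℝ) else 0) * w j)
          = if (∑ j, v₀ j) ≤ ∑ j, x j then (∑ j, w j) else 0 := by
      intro x w; split_ifs <;> simp
    refine ⟨?_, ?_, ?_, ?_, ?_⟩
    · exact Measurable.ite (measurableSet_le measurable_const hsum_meas)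
        measurable_const measurable_const
    · intro v _ j; constructor <;> split_ifs <;> norm_num
    · intro v _; split_ifs <;> simp [hp0]
    · intro w hw w' hw'
      rw [hkey, hkey]
      split_ifs with h1 h2 h2 <;> (try simp only [not_le] at *) <;> linarith
    · intro w hw
      rw [hkey]
      split_ifs with h1 <;> (try simp only [not_le] at *) <;> linarith
  obtain ⟨htmeas, _, ht0, _, _⟩ := (hIsMech q t).mp hqt
  -- facts for general supported probability measures
  have hFfacts : ∀ F : Measure (Fin J → ℝ), IsProbabilityMeasure F → F Vᶜ = 0 →
      ((∑ j, lo j) ≤ Hind F ∧ Hind F ≤ ∑ j, hi j) ∧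
      Hind F ≤ ∫ v, (∑ j, v j) ∂F ∧ Integrable t F ∧
      Integrable (fun v => ∑ j, v j) F ∧ 0 ≤ ∫ v, t v ∂F := by
    intro F hF hFc
    have haeV : ∀ᵐ w ∂F, w ∈ V := ae_iff.mpr hFc
    have hint : ∀ t' : (Fin J → ℝ) → ℝ, Measurable t' →
        (∀ w ∈ V, 0 ≤ t' w ∧ t' w ≤ ∑ j, w j) → Integrable t' F := by
      intro t' hmt hbd
      refine ⟨hmt.aestronglyMeasurable, ?_⟩
      apply HasFiniteIntegral.of_bounded (C := ∑ j, hi j)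
      filter_upwards [haeV] with w hw
      rw [Real.norm_eq_abs, abs_le]
      exact ⟨by linarith [(hbd w hw).1, hhi_nonneg],
        le_trans (hbd w hw).2 (hsum_hi w hw)⟩
    have hint_sum : Integrable (fun v => ∑ j, v j) F :=
      hint _ hsum_meas fun w hw =>
        ⟨le_trans hSpos.le (hsum_lo w hw), le_refl _⟩
    have hint_mech : ∀ q' t', IsMech q' t' → Integrable t' F := by
      intro q' t' hm
      exact hint t' ((hIsMech q' t').mp hm).1 (hmechbd q' t' hm)
    have hmem_lo : (∑ j, lo j) ∈
        {x : ℝ | ∃ q' t', IsMech q' t' ∧ x = ∫ v, t' v ∂F} := by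
      refine ⟨fun _ _ => 1, fun _ => ∑ j, lo j, hconst, ?_⟩
      simp
    have hSne : {x : ℝ | ∃ q' t', IsMech q' t' ∧ x = ∫ v, t' v ∂F}.Nonempty :=
      ⟨_, hmem_lo⟩
    have hub : ∀ x ∈ {x : ℝ | ∃ q' t', IsMech q' t' ∧ x = ∫ v, t' v ∂F},
        x ≤ ∫ v, (∑ j, v j) ∂F := by
      rintro x ⟨q', t', hm, rfl⟩
      refine integral_mono_ae (hint_mech q' t' hm) hint_sum ?_
      filter_upwards [haeV] with w hw
      exact (hmechbd q' t' hm w hw).2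
    have hintsum_hi : ∫ v, (∑ j, v j) ∂F ≤ ∑ j, hi j := by
      have := integral_mono_ae hint_sum (integrable_const (∑ j, hi j))
        (by filter_upwards [haeV] with w hw; exact hsum_hi w hw)
      simpa using this
    have hbdd : BddAbove {x : ℝ | ∃ q' t', IsMech q' t' ∧ x = ∫ v, t' v ∂F} :=
      ⟨∫ v, (∑ j, v j) ∂F, hub⟩
    have h1 : (∑ j, lo j) ≤ Hind F := by
      rw [hHind]; exact le_csSup hbdd hmem_lo
    have h2 : Hind F ≤ ∫ v, (∑ j, v j) ∂F := by
      rw [hHind]; exact csSup_le hSne hub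
    have hint_t : Integrable t F := hint_mech q t hqt
    have h3 : 0 ≤ ∫ v, t v ∂F :=
      integral_nonneg_of_ae (by filter_upwards [haeV] with w hw; exact ht0 w hw)
    exact ⟨⟨h1, le_trans h2 hintsum_hi⟩, h2, hint_t, hint_sum, h3⟩
  refine ⟨hSpos, fun F hF hFc => (hFfacts F hF hFc).1, ?_⟩
  -- hindsight value of a Dirac measure
  have hdirac_supp : ∀ v ∈ V, (Measure.dirac v) Vᶜ = 0 := by
    intro v hv
    rw [Measure.dirac_apply' _ hVmeas.compl]
    simp [hv]
  have hHd : ∀ v ∈ V, Hind (Measure.dirac v) = ∑ j, v j := by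
    intro v hv
    have hmemp : (∑ j, v j) ∈
        {x : ℝ | ∃ q' t', IsMech q' t' ∧ x = ∫ w, t' w ∂(Measure.dirac v)} := by
      refine ⟨_, _, hpp v hv, ?_⟩
      rw [integral_dirac' _ v (((hIsMech _ _).mp (hpp v hv)).1).stronglyMeasurable]
      simp
    have hub : ∀ x ∈ {x : ℝ | ∃ q' t', IsMech q' t' ∧ x = ∫ w, t' w ∂(Measure.dirac v)},
        x ≤ ∑ j, v j := by
      rintro x ⟨q', t', hm, rfl⟩
      rw [integral_dirac' _ v (((hIsMech _ _).mp hm).1).stronglyMeasurable]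
      exact (hmechbd q' t' hm v hv).2
    rw [hHind]
    exact le_antisymm (csSup_le ⟨_, hmemp⟩ hub) (le_csSup ⟨_, hub⟩ hmemp)
  -- the two sets
  set A : Set ℝ := {r : ℝ | ∃ F : Measure (Fin J → ℝ),
      IsProbabilityMeasure F ∧ F Vᶜ = 0 ∧ r = (∫ v, t v ∂F) / Hind F} with hA
  set B : Set ℝ := {r : ℝ | ∃ v ∈ V, r = t v / ∑ j, v j} with hB
  have hBne : B.Nonempty := ⟨t lo / ∑ j, lo j, lo, hloV, rfl⟩
  have hB0 : ∀ r ∈ B, 0 ≤ r := by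
    rintro r ⟨v, hv, rfl⟩
    exact div_nonneg (ht0 v hv) (le_trans hSpos.le (hsum_lo v hv))
  have hBbdd : BddBelow B := ⟨0, hB0⟩
  have hc0 : 0 ≤ sInf B := le_csInf hBne hB0
  have hcle : ∀ v ∈ V, sInf B * (∑ j, v j) ≤ t v := by
    intro v hv
    have hpos : 0 < ∑ j, v j := lt_of_lt_of_le hSpos (hsum_lo v hv)
    have := csInf_le hBbdd (⟨v, hv, rfl⟩ : t v / ∑ j, v j ∈ B)
    exact (le_div_iff₀ hpos).mp this
  have hBA : B ⊆ A := by
    rintro r ⟨v, hv, rfl⟩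
    refine ⟨Measure.dirac v, inferInstance, hdirac_supp v hv, ?_⟩
    rw [integral_dirac' _ v htmeas.stronglyMeasurable, hHd v hv]
  have hAlb : ∀ r ∈ A, sInf B ≤ r := by
    rintro r ⟨F, hF, hFc, rfl⟩
    obtain ⟨⟨h1, _⟩, h2, hint_t, hint_sum, _⟩ := hFfacts F hF hFc
    have hHpos : 0 < Hind F := lt_of_lt_of_le hSpos h1
    have haeV : ∀ᵐ w ∂F, w ∈ V := ae_iff.mpr hFc
    have hstep : sInf B * ∫ v, (∑ j, v j) ∂F ≤ ∫ v, t v ∂F := by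
      rw [← MeasureTheory.integral_const_mul]
      refine integral_mono_ae (hint_sum.const_mul _) hint_t ?_
      filter_upwards [haeV] with w hw
      exact hcle w hw
    have : sInf B * Hind F ≤ ∫ v, t v ∂F :=
      le_trans (mul_le_mul_of_nonneg_left h2 hc0) hstep
    exact (le_div_iff₀ hHpos).mpr this
  have hAne : A.Nonempty := hBne.mono hBA
  have hAbdd : BddBelow A := ⟨sInf B, hAlb⟩
  exact le_antisymm (csInf_le_csInf hAbdd hBne hBA) (le_csInf hAne hAlb)
end

section
/- Let C be a finite collection of subsets c ⊆ {1,…,J} with bounds 0 < lo_c ≤ hi_c for each c ∈ C, and let V_C = {v ∈ ℝ^J : v_j ≥ 0 for all j, and lo_c ≤ ∑_{j∈c} v_j ≤ hi_c for all c ∈ C}; assume V_C is nonempty. Let B ⊆ C be a subcollection whose members form a partition of {1,…,J}, let γ*_B ∈ (0,1] be the unique zero of φ_B, and let M^B be the generalized semi-separable mechanism with parameter γ*_B. Then M^B is incentive compatible and individually rational on V_C and its worst-case performance ratio on V_C satisfies inf_{v∈V_C} t^{M^B}(v)/(∑_{j=1}^J v_j) ≥ γ*_B. In particular, choosing a partition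 B ⊆ C maximizing γ*_B, the mechanism M^B achieves a worst-case performance ratio of at least max{γ*_B : B ⊆ C a partition of {1,…,J}} under the ambiguity set of all distributions supported on V_C. -/
open Real Finset

/-- `φ_B(γ)` for a finite collection `B` of bundles with bounds
`lo, hi : Finset (Fin J) → ℝ`:
`φ_B(γ) = γ·e^{−1/γ}·∑_{b∈S_B(γ)} hi_b − ∑_{b∈B∖S_B(γ)} lo_b·(γ·ln(lo_b/hi_b) − γ + 1)`,
where `S_B(γ) = {b ∈ B : lo_b < e^{−1/γ}·hi_b}`. -/
noncomputable def phiB (J : ℕ) (B : Finset (Finset (Fin J)))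
    (lo hi : Finset (Fin J) → ℝ) (γ : ℝ) : ℝ :=
  γ * Real.exp (-1/γ) * (∑ b ∈ B, if lo b < Real.exp (-1/γ) * hi b then hi b else 0)
    - ∑ b ∈ B, if lo b < Real.exp (-1/γ) * hi b then 0
               else lo b * (γ * Real.log (lo b / hi b) - γ + 1)

lemma lem1 {x y : ℝ} (hx : 0 < x) (hy : 0 < y) :
    x * (Real.log y - Real.log x) ≤ y - x := by
  have h := Real.log_le_sub_one_of_pos (div_pos hy hx)
  rw [Real.log_div hy.ne' hx.ne'] at h
  have h2 := mul_le_mul_of_nonneg_left h hx.le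
  have h3 : x * (y / x - 1) = y - x := by field_simp
  linarith

lemma lem2 {x θ y : ℝ} (hx : 0 ≤ x) (hxθ : x ≤ θ) (hθ : 0 < θ) (hy : θ ≤ y) :
    x * (Real.log y - Real.log θ) ≤ y - θ := by
  have hyp : 0 < y := lt_of_lt_of_le hθ hy
  have h := Real.log_le_sub_one_of_pos (div_pos hyp hθ)
  rw [Real.log_div hyp.ne' hθ.ne'] at h
  have h2 := mul_le_mul_of_nonneg_left h hx
  have h4 : 0 ≤ y / θ - 1 := by
    rw [sub_nonneg, le_div_iff₀ hθ]; linarith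
  have h5 : θ * (y / θ - 1) = y - θ := by field_simp
  nlinarith [mul_le_mul_of_nonneg_right hxθ h4]

lemma lem3 {θ x : ℝ} (hθ : 0 < θ) (hx : 0 < x) :
    x - θ ≤ x * (Real.log x - Real.log θ) := by
  have h := Real.log_le_sub_one_of_pos (div_pos hθ hx)
  rw [Real.log_div hθ.ne' hx.ne'] at h
  have h2 := mul_le_mul_of_nonneg_left h hx.le
  have h3 : x * (θ / x - 1) = θ - x := by field_simp
  nlinarith

lemma qshift {γ hi z : ℝ} (hγ : 0 < γ) (hhi : 0 < hi) (hz : 0 < z) :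
    γ * Real.log (z / hi) + 1 = γ * (Real.log z - Real.log (Real.exp (-1/γ) * hi)) := by
  rw [Real.log_mul (Real.exp_ne_zero _) hhi.ne', Real.log_exp,
      Real.log_div hz.ne' hhi.ne']
  field_simp
  ring

lemma sign_le_aux {γ θ z : ℝ} (hγ : 0 < γ) (hθ : 0 < θ) (hz : 0 < z) :
    0 ≤ γ * (Real.log z - Real.log θ) ↔ θ ≤ z := by
  rw [mul_nonneg_iff_of_pos_left hγ, sub_nonneg, Real.log_le_log_iff hθ hz]

lemma block_ic {γ lo hi x y : ℝ} (hγ : 0 < γ) (hlo : 0 < lo) (hlohi : lo ≤ hi)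
    (hx1 : lo ≤ x) (hy1 : lo ≤ y) :
    max (γ * Real.log (y / hi) + 1) 0 * x - tcomp γ lo hi y ≤
      max (γ * Real.log (x / hi) + 1) 0 * x - tcomp γ lo hi x := by
  have hhi : 0 < hi := lt_of_lt_of_le hlo hlohi
  have hxp : 0 < x := lt_of_lt_of_le hlo hx1
  have hyp : 0 < y := lt_of_lt_of_le hlo hy1
  unfold tcomp
  rw [qshift hγ hhi hxp, qshift hγ hhi hyp]
  set θ := Real.exp (-1/γ) * hi with hθdef
  have hθ : 0 < θ := mul_pos (Real.exp_pos _) hhi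
  have hlog : ∀ a b : ℝ, 0 < a → a ≤ b → Real.log a ≤ Real.log b :=
    fun a b ha hab => Real.log_le_log ha hab
  split_ifs with hc
  · rcases le_or_gt x θ with hxθ | hxθ
    · have hQx : max (γ * (Real.log x - Real.log θ)) 0 = 0 :=
        max_eq_right (by nlinarith [hlog x θ hxp hxθ])
      have hmx : max (x - θ) 0 = 0 := max_eq_right (by linarith)
      rw [hQx, hmx]
      rcases le_or_gt y θ with hyθ | hyθ
      · have hQy : max (γ * (Real.log y - Real.log θ)) 0 = 0 :=
          max_eq_right (by nlinarith [hlog y θ hyp hyθ])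
        have hmy : max (y - θ) 0 = 0 := max_eq_right (by linarith)
        rw [hQy, hmy]
      · have hQy : max (γ * (Real.log y - Real.log θ)) 0 = γ * (Real.log y - Real.log θ) :=
          max_eq_left ((sign_le_aux hγ hθ hyp).mpr hyθ.le)
        have hmy : max (y - θ) 0 = y - θ := max_eq_left (by linarith)
        rw [hQy, hmy]
        have key := lem2 hxp.le hxθ hθ hyθ.le
        nlinarith
    · have hQx : max (γ * (Real.log x - Real.log θ)) 0 = γ * (Real.log x - Real.log θ) :=
        max_eq_left ((sign_le_aux hγ hθ hxp).mpr hxθ.le)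
      have hmx : max (x - θ) 0 = x - θ := max_eq_left (by linarith)
      rw [hQx, hmx]
      rcases le_or_gt y θ with hyθ | hyθ
      · have hQy : max (γ * (Real.log y - Real.log θ)) 0 = 0 :=
          max_eq_right (by nlinarith [hlog y θ hyp hyθ])
        have hmy : max (y - θ) 0 = 0 := max_eq_right (by linarith)
        rw [hQy, hmy]
        have key := lem3 hθ hxp
        nlinarith
      · have hQy : max (γ * (Real.log y - Real.log θ)) 0 = γ * (Real.log y - Real.log θ) :=
          max_eq_left ((sign_le_aux hγ hθ hyp).mpr hyθ.le)
        have hmy : max (y - θ) 0 = y - θ := max_eq_left (by linarith)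
        rw [hQy, hmy]
        have key := lem1 hxp hyp
        nlinarith
  · push_neg at hc
    have hQx : max (γ * (Real.log x - Real.log θ)) 0 = γ * (Real.log x - Real.log θ) :=
      max_eq_left ((sign_le_aux hγ hθ hxp).mpr (le_trans hc hx1))
    have hQy : max (γ * (Real.log y - Real.log θ)) 0 = γ * (Real.log y - Real.log θ) :=
      max_eq_left ((sign_le_aux hγ hθ hyp).mpr (le_trans hc hy1))
    rw [hQx, hQy]
    have key := lem1 hxp hyp
    nlinarith

lemma tcomp_nonneg_s17 {γ lo hi x : ℝ} (hγ : 0 < γ) (hlo : 0 < lo) (hlohi : lo ≤ hi)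
    (hx1 : lo ≤ x) : 0 ≤ tcomp γ lo hi x := by
  have hhi : 0 < hi := lt_of_lt_of_le hlo hlohi
  unfold tcomp
  split_ifs with hc
  · exact mul_nonneg hγ.le (le_max_right _ _)
  · push_neg at hc
    have h1 : 0 ≤ γ * (Real.log lo - Real.log (Real.exp (-1/γ) * hi)) :=
      (sign_le_aux hγ (mul_pos (Real.exp_pos _) hhi) hlo).mpr hc
    have h2 := qshift hγ hhi hlo
    nlinarith

lemma tcomp_ir_base {γ lo hi x : ℝ} (hγ : 0 < γ) (hlo : 0 < lo) (hlohi : lo ≤ hi)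
    (hx1 : lo ≤ x) :
    0 ≤ max (γ * Real.log (lo / hi) + 1) 0 * x - tcomp γ lo hi lo := by
  have hhi : 0 < hi := lt_of_lt_of_le hlo hlohi
  have hθ : 0 < Real.exp (-1/γ) * hi := mul_pos (Real.exp_pos _) hhi
  unfold tcomp
  split_ifs with hc
  · have hQ : max (γ * Real.log (lo / hi) + 1) 0 = 0 := by
      apply max_eq_right
      rw [qshift hγ hhi hlo]
      by_contra h
      push_neg at h
      exact absurd ((sign_le_aux hγ hθ hlo).mp h.le) (by linarith)
    have hm : max (lo - Real.exp (-1/γ) * hi) 0 = 0 := max_eq_right (by linarith)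
    rw [hQ, hm]; simp
  · push_neg at hc
    have h1 : 0 ≤ γ * (Real.log lo - Real.log (Real.exp (-1/γ) * hi)) :=
      (sign_le_aux hγ hθ hlo).mpr hc
    have h2 := qshift hγ hhi hlo
    have hQ : max (γ * Real.log (lo / hi) + 1) 0 = γ * Real.log (lo / hi) + 1 :=
      max_eq_left (by linarith)
    rw [hQ]
    nlinarith

lemma block_ir {γ lo hi x : ℝ} (hγ : 0 < γ) (hlo : 0 < lo) (hlohi : lo ≤ hi)
    (hx1 : lo ≤ x) :
    0 ≤ max (γ * Real.log (x / hi) + 1) 0 * x - tcomp γ lo hi x :=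
  le_trans (tcomp_ir_base hγ hlo hlohi hx1)
    (block_ic hγ hlo hlohi hx1 le_rfl)

lemma tcomp_lb {γ lo hi x : ℝ} (hγ : 0 < γ) :
    (if lo < Real.exp (-1/γ) * hi then -(γ * (Real.exp (-1/γ) * hi))
     else lo * (γ * (Real.log (lo / hi) - 1) + 1)) ≤ tcomp γ lo hi x - γ * x := by
  unfold tcomp
  split_ifs with hc
  · have h := le_max_left (x - Real.exp (-1/γ) * hi) 0
    nlinarith
  · linarith

lemma neg_phi (J : ℕ) (B : Finset (Finset (Fin J))) (lo hi : Finset (Fin J) → ℝ) (γ : ℝ) :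
    ∑ b ∈ B, (if lo b < Real.exp (-1/γ) * hi b then -(γ * (Real.exp (-1/γ) * hi b))
      else lo b * (γ * (Real.log (lo b / hi b) - 1) + 1)) = - phiB J B lo hi γ := by
  unfold phiB
  rw [neg_sub, Finset.mul_sum, ← Finset.sum_sub_distrib]
  refine Finset.sum_congr rfl fun b _ => ?_
  split_ifs with h <;> ring

/-- let `C` be a finite collection of bundles with bounds
`0 < lo_c ≤ hi_c`, `V_C = {v ≥ 0 : lo_c ≤ ∑_{j∈c} v_j ≤ hi_c ∀ c ∈ C}` nonempty,
and let `B ⊆ C` be a subcollection forming a partition of `{1,…,J}` with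
`γ*_B ∈ (0,1]` the zero of `φ_B`.  Then the generalized semi-separable
mechanism `M^B` with parameter `γ*_B` is incentive compatible and individually
rational on `V_C`, and its worst-case performance ratio on `V_C` is at least
`γ*_B`. -/
theorem stmt17 (J : ℕ) (hJ : 1 ≤ J)
    (C : Finset (Finset (Fin J))) (lo hi : Finset (Fin J) → ℝ)
    (hlo : ∀ c ∈ C, 0 < lo c) (hlohi : ∀ c ∈ C, lo c ≤ hi c)
    (VC : Set (Fin J → ℝ))
    (hVC : VC = {v | (∀ j, 0 ≤ v j) ∧
      ∀ c ∈ C, (∑ j ∈ c, v j) ∈ Set.Icc (lo c) (hi c)})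
    (hVCne : VC.Nonempty)
    (B : Finset (Finset (Fin J))) (hBC : B ⊆ C)
    (hBne : ∀ b ∈ B, b.Nonempty)
    (hBdisj : ∀ b ∈ B, ∀ b' ∈ B, b ≠ b' → Disjoint b b')
    (hBcover : ∀ j, ∃ b ∈ B, j ∈ b)
    (blk : Fin J → Finset (Fin J)) (hblk : ∀ j, blk j ∈ B ∧ j ∈ blk j)
    (γ : ℝ) (hγ : γ ∈ Set.Ioc (0:ℝ) 1) (hzero : phiB J B lo hi γ = 0)
    (huniq : ∀ γ' ∈ Set.Ioc (0:ℝ) 1, phiB J B lo hi γ' = 0 → γ' = γ)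
    (Q : (Fin J → ℝ) → Fin J → ℝ)
    (hQ : ∀ v j, Q v j =
      max (γ * Real.log ((∑ i ∈ blk j, v i) / hi (blk j)) + 1) 0)
    (T : (Fin J → ℝ) → ℝ)
    (hT : ∀ v, T v = ∑ b ∈ B, tcomp γ (lo b) (hi b) (∑ j ∈ b, v j)) :
    -- M^B is a feasible (bounds, IC, IR) mechanism on V_C
    ((∀ v ∈ VC, ∀ j, 0 ≤ Q v j ∧ Q v j ≤ 1) ∧
     (∀ v ∈ VC, 0 ≤ T v) ∧
     (∀ v ∈ VC, ∀ v' ∈ VC,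
        (∑ j, Q v' j * v j) - T v' ≤ (∑ j, Q v j * v j) - T v) ∧
     (∀ v ∈ VC, 0 ≤ (∑ j, Q v j * v j) - T v)) ∧
    -- the worst-case performance ratio of M^B on V_C is at least γ*_B
    γ ≤ sInf {x : ℝ | ∃ v ∈ VC, x = T v / ∑ j, v j} := by
  obtain ⟨hγ0, hγ1⟩ := hγ
  have hhiC : ∀ c ∈ C, 0 < hi c := fun c hc => lt_of_lt_of_le (hlo c hc) (hlohi c hc)
  have hrange : ∀ v ∈ VC, ∀ b ∈ B, lo b ≤ ∑ j ∈ b, v j ∧ ∑ j ∈ b, v j ≤ hi b := by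
    intro v hv b hb
    rw [hVC] at hv
    exact ⟨(hv.2 b (hBC hb)).1, (hv.2 b (hBC hb)).2⟩
  have hblkeq : ∀ (j : Fin J) (b : Finset (Fin J)), b ∈ B → j ∈ b → blk j = b := by
    intro j b hb hjb
    by_contra hne
    exact (Finset.disjoint_left.mp (hBdisj _ (hblk j).1 b hb hne)) (hblk j).2 hjb
  have hBuniv : (Finset.univ : Finset (Fin J)) = B.biUnion id := by
    ext j
    simp only [Finset.mem_univ, Finset.mem_biUnion, id_eq, true_iff]
    exact hBcover j
  have hPD : (↑B : Set (Finset (Fin J))).PairwiseDisjoint id :=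
    fun b hb b' hb' hne => hBdisj b hb b' hb' hne
  have hsum : ∀ g : Fin J → ℝ, ∑ j, g j = ∑ b ∈ B, ∑ j ∈ b, g j := by
    intro g
    rw [hBuniv, Finset.sum_biUnion hPD]
    rfl
  have hsum2 : ∀ (f : Finset (Fin J) → ℝ) (w : Fin J → ℝ),
      ∑ j, f (blk j) * w j = ∑ b ∈ B, f b * ∑ j ∈ b, w j := by
    intro f w
    rw [hsum fun j => f (blk j) * w j]
    refine Finset.sum_congr rfl fun b hb => ?_
    rw [Finset.mul_sum]
    exact Finset.sum_congr rfl fun j hj => by rw [hblkeq j b hb hj]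
  have hQE : ∀ v w : Fin J → ℝ, ∑ j, Q v j * w j
      = ∑ b ∈ B, max (γ * Real.log ((∑ i ∈ b, v i) / hi b) + 1) 0 * ∑ j ∈ b, w j := by
    intro v w
    rw [← hsum2 (fun b => max (γ * Real.log ((∑ i ∈ b, v i) / hi b) + 1) 0) w]
    exact Finset.sum_congr rfl fun j _ => by rw [hQ]
  have hQb : ∀ v ∈ VC, ∀ j, 0 ≤ Q v j ∧ Q v j ≤ 1 := by
    intro v hv j
    have hb := (hblk j).1
    have h2 := (hrange v hv _ hb).2
    have hhib : 0 < hi (blk j) := hhiC _ (hBC hb)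
    have hlob : 0 < lo (blk j) := hlo _ (hBC hb)
    have h1 := (hrange v hv _ hb).1
    rw [hQ]
    refine ⟨le_max_right _ _, max_le ?_ zero_le_one⟩
    have hlog : Real.log ((∑ i ∈ blk j, v i) / hi (blk j)) ≤ 0 :=
      Real.log_nonpos (div_nonneg (le_trans hlob.le h1) hhib.le) ((div_le_one hhib).mpr h2)
    nlinarith
  have hIC : ∀ v ∈ VC, ∀ v' ∈ VC,
      (∑ j, Q v' j * v j) - T v' ≤ (∑ j, Q v j * v j) - T v := by
    intro v hv v' hv'
    rw [hQE v' v, hQE v v, hT v, hT v', ← Finset.sum_sub_distrib, ← Finset.sum_sub_distrib]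
    refine Finset.sum_le_sum fun b hb => ?_
    exact block_ic hγ0 (hlo b (hBC hb)) (hlohi b (hBC hb))
      (hrange v hv b hb).1 (hrange v' hv' b hb).1
  have hIR : ∀ v ∈ VC, 0 ≤ (∑ j, Q v j * v j) - T v := by
    intro v hv
    rw [hQE v v, hT v, ← Finset.sum_sub_distrib]
    refine Finset.sum_nonneg fun b hb => ?_
    exact block_ir hγ0 (hlo b (hBC hb)) (hlohi b (hBC hb)) (hrange v hv b hb).1
  have hTnn : ∀ v ∈ VC, 0 ≤ T v := by
    intro v hv
    rw [hT]
    exact Finset.sum_nonneg fun b hb =>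
      tcomp_nonneg_s17 hγ0 (hlo b (hBC hb)) (hlohi b (hBC hb)) (hrange v hv b hb).1
  have hTγ : ∀ v ∈ VC, γ * ∑ j, v j ≤ T v := by
    intro v hv
    rw [hT, hsum fun j => v j]
    have key : ∑ b ∈ B, (if lo b < Real.exp (-1/γ) * hi b then -(γ * (Real.exp (-1/γ) * hi b))
        else lo b * (γ * (Real.log (lo b / hi b) - 1) + 1))
        ≤ ∑ b ∈ B, (tcomp γ (lo b) (hi b) (∑ j ∈ b, v j) - γ * ∑ j ∈ b, v j) :=
      Finset.sum_le_sum fun b hb => tcomp_lb hγ0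
    rw [neg_phi J B lo hi γ, hzero, Finset.sum_sub_distrib, ← Finset.mul_sum] at key
    linarith
  have hpos : ∀ v ∈ VC, 0 < ∑ j, v j := by
    intro v hv
    rw [hsum fun j => v j]
    obtain ⟨b0, hb0, _⟩ := hBcover ⟨0, hJ⟩
    calc (0:ℝ) < lo b0 := hlo b0 (hBC hb0)
      _ ≤ ∑ j ∈ b0, v j := (hrange v hv b0 hb0).1
      _ ≤ ∑ b ∈ B, ∑ j ∈ b, v j :=
        Finset.single_le_sum
          (fun b hb => le_trans (hlo b (hBC hb)).le (hrange v hv b hb).1) hb0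
  refine ⟨⟨hQb, hTnn, hIC, hIR⟩, ?_⟩
  refine le_csInf ?_ ?_
  · obtain ⟨v, hv⟩ := hVCne
    exact ⟨T v / ∑ j, v j, v, hv, rfl⟩
  · rintro x ⟨v, hv, rfl⟩
    rw [le_div_iff₀ (hpos v hv)]
    linarith [hTγ v hv]
end

section
/- Let γ ∈ (0,1]. If φ(γ) ≥ 0, then inf_{v∈V} t^{M_γ}(v)/(∑_{j=1}^J v_j) = (∑_{j∉S(γ)} lo_j·(γ·ln(lo_j/hi_j) + 1))/(∑_{j∈S(γ)} e^{−1/γ}·hi_j + ∑_{j∉S(γ)} lo_j), and the infimum is attained at the point v with v_j = e^{−1/γ}·hi_j for j ∈ S(γ) and v_j = lo_j for j ∉ S(γ). If φ(γ) ≤ 0, then inf_{v∈V} t^{M_γ}(v)/(∑_j v_j) = (γ·(1 − e^{−1/γ})·∑_{j∈S(γ)} hi_j + ∑_{j∉S(γ)} (γ·hi_j + lo_j·(γ·(ln(lo_j/hi_j) − 1) + 1)))/(∑_{j=1}^J hi_j), and the infimum is attained at v = (hi_1, …, hi_J). -/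
open Real Finset

lemma lb_aux (J : ℕ) (hJ : 1 ≤ J) (lo hi : Fin J → ℝ) (hlo : ∀ j, 0 < lo j)
    (γ r : ℝ) (vstar : Fin J → ℝ)
    (heq : Tpay J lo hi γ vstar = r * ∑ j, vstar j)
    (hpt : ∀ j (x : ℝ), x ∈ Set.Icc (lo j) (hi j) →
      tcomp γ (lo j) (hi j) (vstar j) - r * vstar j ≤ tcomp γ (lo j) (hi j) x - r * x)
    (v : Fin J → ℝ) (hv : ∀ j, v j ∈ Set.Icc (lo j) (hi j)) :
    r ≤ Tpay J lo hi γ v / ∑ j, v j := by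
  haveI : Nonempty (Fin J) := ⟨⟨0, by omega⟩⟩
  have hpos : 0 < ∑ j, v j :=
    Finset.sum_pos (fun j _ => lt_of_lt_of_le (hlo j) (hv j).1) Finset.univ_nonempty
  rw [le_div_iff₀ hpos]
  have hsum : ∑ j, (tcomp γ (lo j) (hi j) (vstar j) - r * vstar j)
      ≤ ∑ j, (tcomp γ (lo j) (hi j) (v j) - r * v j) :=
    Finset.sum_le_sum (fun j _ => hpt j (v j) (hv j))
  simp only [Finset.sum_sub_distrib, ← Finset.mul_sum] at hsum
  unfold Tpay at heq ⊢
  linarith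

/-- characterization of the worst case of `M_γ` on the box `V`.
If `φ(γ) ≥ 0` the minimum of `t^{M_γ}(v)/∑ j v j` over `V` equals
`(∑_{j∉S(γ)} lo_j·(γ·ln(lo_j/hi_j)+1))/(∑_{j∈S(γ)} e^{−1/γ}·hi_j + ∑_{j∉S(γ)} lo_j)`,
attained at `v_j = e^{−1/γ}·hi_j` for `j ∈ S(γ)` and `v_j = lo_j` otherwise;
if `φ(γ) ≤ 0` it equals
`(γ·(1−e^{−1/γ})·∑_{j∈S(γ)} hi_j + ∑_{j∉S(γ)} (γ·hi_j + lo_j·(γ·(ln(lo_j/hi_j)−1)+1)))/(∑ j hi_j)`,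
attained at `v = hi`. -/
theorem stmt19 (J : ℕ) (hJ : 1 ≤ J) (lo hi : Fin J → ℝ)
    (hlo : ∀ j, 0 < lo j) (hlohi : ∀ j, lo j ≤ hi j)
    (γ : ℝ) (hγ : γ ∈ Set.Ioc (0:ℝ) 1)
    (vlow : Fin J → ℝ)
    (hvlow : ∀ j, vlow j =
      if lo j < Real.exp (-1/γ) * hi j then Real.exp (-1/γ) * hi j else lo j) :
    (0 ≤ phi J lo hi γ →
      IsLeast {x : ℝ | ∃ v : Fin J → ℝ, (∀ j, v j ∈ Set.Icc (lo j) (hi j)) ∧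
          x = Tpay J lo hi γ v / ∑ j, v j}
        ((∑ j, if lo j < Real.exp (-1/γ) * hi j then 0
               else lo j * (γ * Real.log (lo j / hi j) + 1)) /
         (∑ j, if lo j < Real.exp (-1/γ) * hi j then Real.exp (-1/γ) * hi j
               else lo j)) ∧
      (∀ j, vlow j ∈ Set.Icc (lo j) (hi j)) ∧
      Tpay J lo hi γ vlow / (∑ j, vlow j) =
        ((∑ j, if lo j < Real.exp (-1/γ) * hi j then 0
               else lo j * (γ * Real.log (lo j / hi j) + 1)) /
         (∑ j, if lo j < Real.exp (-1/γ) * hi j then Real.exp (-1/γ) * hi j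
               else lo j))) ∧
    (phi J lo hi γ ≤ 0 →
      IsLeast {x : ℝ | ∃ v : Fin J → ℝ, (∀ j, v j ∈ Set.Icc (lo j) (hi j)) ∧
          x = Tpay J lo hi γ v / ∑ j, v j}
        ((γ * (1 - Real.exp (-1/γ)) *
            (∑ j, if lo j < Real.exp (-1/γ) * hi j then hi j else 0) +
          ∑ j, if lo j < Real.exp (-1/γ) * hi j then 0
               else γ * hi j + lo j * (γ * (Real.log (lo j / hi j) - 1) + 1)) /
         (∑ j, hi j)) ∧
      Tpay J lo hi γ hi / (∑ j, hi j) =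
        ((γ * (1 - Real.exp (-1/γ)) *
            (∑ j, if lo j < Real.exp (-1/γ) * hi j then hi j else 0) +
          ∑ j, if lo j < Real.exp (-1/γ) * hi j then 0
               else γ * hi j + lo j * (γ * (Real.log (lo j / hi j) - 1) + 1)) /
         (∑ j, hi j))) := by
  haveI : Nonempty (Fin J) := ⟨⟨0, by omega⟩⟩
  obtain ⟨hγ0, hγ1⟩ := hγ
  set E := Real.exp (-1/γ) with hE
  have hE0 : 0 < E := Real.exp_pos _
  have hE1 : E ≤ 1 := by
    have : (-1/γ : ℝ) ≤ 0 := by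
      apply div_nonpos_of_nonpos_of_nonneg <;> linarith
    calc E ≤ Real.exp 0 := Real.exp_le_exp.mpr this
    _ = 1 := Real.exp_zero
  have hipos : ∀ j, 0 < hi j := fun j => (hlo j).trans_le (hlohi j)
  have hapos : ∀ j, 0 < E * hi j := fun j => mul_pos hE0 (hipos j)
  have hahi : ∀ j, E * hi j ≤ hi j := fun j => by nlinarith [hipos j]
  have hlog : ∀ j, ¬ (lo j < E * hi j) → 0 ≤ γ * Real.log (lo j / hi j) + 1 := by
    intro j h
    have h1 : E * hi j ≤ lo j := not_lt.mp h
    have h2 : E ≤ lo j / hi j := (le_div_iff₀ (hipos j)).mpr (by linarith)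
    have h3 : -1/γ ≤ Real.log (lo j / hi j) :=
      (Real.le_log_iff_exp_le (div_pos (hlo j) (hipos j))).mpr h2
    have h4 := mul_le_mul_of_nonneg_left h3 hγ0.le
    have h5 : γ * (-1/γ) = -1 := by field_simp
    linarith
  -- abbreviations
  set num1 := (∑ j, if lo j < E * hi j then (0:ℝ)
               else lo j * (γ * Real.log (lo j / hi j) + 1)) with hnum1
  set den1 := (∑ j, if lo j < E * hi j then E * hi j else lo j) with hden1
  have hden1pos : 0 < den1 := by
    apply Finset.sum_pos _ Finset.univ_nonempty
    intro j _
    split_ifs with h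
    · exact hapos j
    · exact hlo j
  have hnum1nn : 0 ≤ num1 := by
    apply Finset.sum_nonneg
    intro j _
    split_ifs with h
    · exact le_rfl
    · exact mul_nonneg (hlo j).le (hlog j h)
  have hid1 : γ * den1 - num1 = phi J lo hi γ := by
    unfold phi
    rw [hden1, hnum1, Finset.mul_sum, Finset.mul_sum, ← Finset.sum_sub_distrib,
      ← Finset.sum_sub_distrib]
    exact Finset.sum_congr rfl (fun j _ => by split_ifs <;> ring)
  constructor
  · -- case φ ≥ 0
    intro hphi
    set r := num1 / den1 with hr
    have hr0 : 0 ≤ r := div_nonneg hnum1nn hden1pos.le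
    have hrγ : r ≤ γ := by
      rw [hr, div_le_iff₀ hden1pos]
      nlinarith
    have hvmem : ∀ j, vlow j ∈ Set.Icc (lo j) (hi j) := by
      intro j
      rw [hvlow j]
      split_ifs with h
      · exact ⟨le_of_lt h, hahi j⟩
      · exact ⟨le_rfl, hlohi j⟩
    have hTlow : Tpay J lo hi γ vlow = num1 := by
      unfold Tpay
      refine Finset.sum_congr rfl fun j _ => ?_
      rw [hvlow j]
      unfold tcomp
      split_ifs with h
      · simp [hE]
      · ring
    have hSlow : ∑ j, vlow j = den1 := Finset.sum_congr rfl fun j _ => hvlow j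
    have heq : Tpay J lo hi γ vlow = r * ∑ j, vlow j := by
      rw [hTlow, hSlow, hr, div_mul_cancel₀ _ hden1pos.ne']
    have hpt : ∀ j (x : ℝ), x ∈ Set.Icc (lo j) (hi j) →
        tcomp γ (lo j) (hi j) (vlow j) - r * vlow j
          ≤ tcomp γ (lo j) (hi j) x - r * x := by
      intro j x hx
      rw [hvlow j]
      unfold tcomp
      split_ifs with h
      · rcases le_total x (E * hi j) with hxa | hxa
        · rw [max_eq_right (by linarith), max_eq_right (by linarith)]
          nlinarith [mul_nonneg hr0 (sub_nonneg.mpr hxa)]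
        · rw [max_eq_right (sub_nonpos.mpr le_rfl), max_eq_left (by linarith)]
          nlinarith [mul_nonneg (sub_nonneg.mpr hrγ) (sub_nonneg.mpr hxa)]
      · nlinarith [mul_nonneg (sub_nonneg.mpr hrγ) (sub_nonneg.mpr hx.1)]
    refine ⟨⟨⟨vlow, hvmem, ?_⟩, ?_⟩, hvmem, ?_⟩
    · rw [hTlow, hSlow]
    · rintro x ⟨v, hv, rfl⟩
      exact lb_aux J hJ lo hi hlo γ r vlow heq hpt v hv
    · rw [hTlow, hSlow]
  · -- case φ ≤ 0
    intro hphi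
    set A := (∑ j, if lo j < E * hi j then hi j else (0:ℝ)) with hA
    set B := (∑ j, if lo j < E * hi j then (0:ℝ)
              else γ * hi j + lo j * (γ * (Real.log (lo j / hi j) - 1) + 1)) with hB
    have hHpos : 0 < ∑ j, hi j :=
      Finset.sum_pos (fun j _ => hipos j) Finset.univ_nonempty
    have hT2 : Tpay J lo hi γ hi = γ * (1 - E) * A + B := by
      unfold Tpay
      rw [hA, hB, Finset.mul_sum, ← Finset.sum_add_distrib]
      refine Finset.sum_congr rfl fun j _ => ?_
      unfold tcomp
      split_ifs with h
      · rw [max_eq_left (sub_nonneg.mpr (hahi j))]; ring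
      · ring
    have hid2 : Tpay J lo hi γ hi = γ * (∑ j, hi j) - phi J lo hi γ := by
      rw [hT2]
      unfold phi
      have key : γ * A + B =
          γ * (∑ j, hi j) + ∑ j, (if lo j < E * hi j then (0:ℝ)
            else lo j * (γ * Real.log (lo j / hi j) - γ + 1)) := by
        rw [hA, hB, Finset.mul_sum, Finset.mul_sum, ← Finset.sum_add_distrib,
          ← Finset.sum_add_distrib]
        exact Finset.sum_congr rfl (fun j _ => by split_ifs <;> ring)
      linear_combination key
    set r := Tpay J lo hi γ hi / ∑ j, hi j with hr
    have hγr : γ ≤ r := by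
      rw [hr, le_div_iff₀ hHpos]
      nlinarith
    have hr0 : 0 ≤ r := le_trans hγ0.le hγr
    have heq : Tpay J lo hi γ hi = r * ∑ j, hi j := by
      rw [hr, div_mul_cancel₀ _ hHpos.ne']
    have hpt : ∀ j (x : ℝ), x ∈ Set.Icc (lo j) (hi j) →
        tcomp γ (lo j) (hi j) (hi j) - r * hi j
          ≤ tcomp γ (lo j) (hi j) x - r * x := by
      intro j x hx
      unfold tcomp
      split_ifs with h
      · rw [max_eq_left (sub_nonneg.mpr (hahi j))]
        rcases le_total x (E * hi j) with hxa | hxa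
        · rw [max_eq_right (by linarith)]
          nlinarith [mul_nonneg (sub_nonneg.mpr hγr) (sub_nonneg.mpr (hahi j)),
            mul_nonneg hr0 (sub_nonneg.mpr hxa)]
        · rw [max_eq_left (by linarith)]
          nlinarith [mul_nonneg (sub_nonneg.mpr hγr) (sub_nonneg.mpr hx.2)]
      · nlinarith [mul_nonneg (sub_nonneg.mpr hγr) (sub_nonneg.mpr hx.2)]
    have hhimem : ∀ j, hi j ∈ Set.Icc (lo j) (hi j) := fun j => ⟨hlohi j, le_rfl⟩
    refine ⟨⟨⟨hi, hhimem, ?_⟩, ?_⟩, ?_⟩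
    · rw [hT2]
    · rintro x ⟨v, hv, rfl⟩
      have := lb_aux J hJ lo hi hlo γ r hi heq hpt v hv
      rw [hr, hT2] at this
      exact this
    · rw [hr, hT2]
end
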